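/- arXiv:math/0607218 — 4 statements merged into one kernel-verified Lean document; each statement's English description precedes it below -/
import Mathlib

section
/- Let λ be an uncountable regular cardinal and let D be a uniform ultrafilter on λ. Then the following are equivalent: (A) D is weakly reasonable; (B) for every increasing continuous sequence ⟨δ_ξ : ξ < λ⟩ of ordinals below λ there is a club C* of λ such that ∪{[δ_ξ, δ_{ξ+1}) : ξ ∈ C*} ∉ D; (C) for every club C of λ, the quotient D/C does not extend the filter generated by the club subsets of λ. -/
/-!
(A) ⇒ (B): for an increasing continuous `d`, apply weak reasonability to `δ ↦ d (δ + 1)`.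
Since `ξ ≤ d ξ`, every block `[d ξ, d (ξ + 1))` lies in `[ξ, ξ + d (ξ + 1))`, so the club it
yields works for `d` as well.

(B) ⇒ (C): the enumeration `e` of `C ∪ {0}` is increasing and continuous, and a club given by
(B) for `e` is a club outside `D/C`.

(C) ⇒ (A): if `f` witnesses the failure of weak reasonability, let `e` enumerate the club `E` of
closure points of `β ↦ β + f β`. For a club `C'`, the image `e '' C'` is a club and each interval
`[e ξ, e ξ + f (e ξ))` lies in the block `[e ξ, e (ξ + 1))`, so `D/E` contains every club.
-/

namespace RS889

noncomputable section

open Cardinal Set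

universe u v

/-- `F` is a (proper) filter on the set `Z`, presented as the family of its members. -/
def IsFilterOn {α : Type u} (F : Set (Set α)) (Z : Set α) : Prop :=
  (∀ A ∈ F, A ⊆ Z) ∧ Z ∈ F ∧
    (∀ A ∈ F, ∀ B, A ⊆ B → B ⊆ Z → B ∈ F) ∧
    (∀ A ∈ F, ∀ B ∈ F, A ∩ B ∈ F) ∧ ∅ ∉ F

/-- The family `F⁺` of `F`-positive subsets of `Z`. -/
def posOf {α : Type u} (F : Set (Set α)) (Z : Set α) : Set (Set α) :=
  {B | B ⊆ Z ∧ ∀ C ∈ F, (B ∩ C).Nonempty}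

/-- `F` is an ultrafilter on the set `Z`. -/
def IsUltraOn {α : Type u} (F : Set (Set α)) (Z : Set α) : Prop :=
  IsFilterOn F Z ∧ ∀ A ⊆ Z, A ∈ F ∨ Z \ A ∈ F

/-- An unultra filter: every positive set splits into two positive pieces. -/
def Unultra {α : Type u} (F : Set (Set α)) (Z : Set α) : Prop :=
  ∀ A ∈ posOf F Z, ∃ B ⊆ A, B ∈ posOf F Z ∧ A \ B ∈ posOf F Z

/-- The sum `⊕^E_{x ∈ X} Fx x` of the filters `Fx x` on the sets `Z x` over a filter `E` on `X`. -/
def filSum {α : Type u} {β : Type v} (X : Set α) (E : Set (Set α))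
    (Z : α → Set β) (Fx : α → Set (Set β)) : Set (Set β) :=
  {A | A ⊆ (⋃ x ∈ X, Z x) ∧ {x | x ∈ X ∧ Z x ∩ A ∈ Fx x} ∈ E}

/-- The sum `⊕_{ζ<ξ} F ζ` over the filter of co-bounded subsets of `ξ`. -/
def cobddSum {α : Type u} (ξ : Ordinal.{0}) (Z : Ordinal.{0} → Set α)
    (F : Ordinal.{0} → Set (Set α)) : Set (Set α) :=
  {A | A ⊆ (⋃ ζ ∈ Set.Iio ξ, Z ζ) ∧ ∃ β < ξ, ∀ ζ, β ≤ ζ → ζ < ξ → Z ζ ∩ A ∈ F ζ}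

/-- A triple `(α, Z, F)`: an ordinal, a set of ordinals and a family of subsets of `Z`
(intended to be a filter on `Z`). -/
structure LocalFilter : Type 1 where
  a : Ordinal.{0}
  Z : Set Ordinal.{0}
  F : Set (Set Ordinal.{0})

/-- A system of local filters on `lam`. -/
def IsLFS (lam : Cardinal.{0}) (S : Set LocalFilter) : Prop :=
  (∀ t ∈ S, t.Z ⊆ Set.Iio lam.ord ∧ #t.Z < Cardinal.lift.{1} lam ∧
      IsLeast t.Z t.a ∧ IsFilterOn t.F t.Z) ∧
    ∀ β < lam.ord, ∃ t ∈ S, β ≤ t.a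

/-- The family `Q*_lam(S)`. -/
def Qstar (lam : Cardinal.{0}) (S : Set LocalFilter) : Set (Set LocalFilter) :=
  {r | r ⊆ S ∧ #r = Cardinal.lift.{1} lam ∧
    ∀ ξ : Ordinal.{0}, #{t | t ∈ r ∧ t.a = ξ} < Cardinal.lift.{1} lam}

/-- The filter `fil(r)` on `lam` generated by `r`. -/
def fil (lam : Cardinal.{0}) (r : Set LocalFilter) : Set (Set Ordinal.{0}) :=
  {A | A ⊆ Set.Iio lam.ord ∧ ∃ ε < lam.ord, ∀ t ∈ r, ε ≤ t.a → A ∩ t.Z ∈ t.F}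

/-- `r` is strongly disjoint. -/
def StronglyDisjoint (r : Set LocalFilter) : Prop :=
  (∀ s ∈ r, ∀ t ∈ r, s.a = t.a → s = t) ∧
    ∀ s ∈ r, ∀ t ∈ r, s.a < t.a → s.Z ⊆ Set.Iio t.a

/-- The family `Q⁰_lam(S)` of strongly disjoint members of `Q*_lam(S)`. -/
def Qzero (lam : Cardinal.{0}) (S : Set LocalFilter) : Set (Set LocalFilter) :=
  {r | r ∈ Qstar lam S ∧ StronglyDisjoint r}

/-- `fil(H) = ⋃ { fil(r) : r ∈ H }`. -/
def filH (lam : Cardinal.{0}) (H : Set (Set LocalFilter)) : Set (Set Ordinal.{0}) :=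
  {A | ∃ r ∈ H, A ∈ fil lam r}

/-- A uniform family of subsets of `lam`: every member has cardinality `lam`. -/
def IsUniform (lam : Cardinal.{0}) (D : Set (Set Ordinal.{0})) : Prop :=
  ∀ A ∈ D, #A = Cardinal.lift.{1} lam

/-- `C` is a club (closed unbounded) subset of `lam`. -/
def IsClub (lam : Cardinal.{0}) (C : Set Ordinal.{0}) : Prop :=
  C ⊆ Set.Iio lam.ord ∧ (∀ β < lam.ord, ∃ γ ∈ C, β < γ) ∧
    ∀ δ, δ < lam.ord → δ ≠ 0 → (∀ β < δ, ∃ γ ∈ C, β < γ ∧ γ < δ) → δ ∈ C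

/-- `St` is stationary in `lam`. -/
def IsStationary (lam : Cardinal.{0}) (St : Set Ordinal.{0}) : Prop :=
  ∀ C, IsClub lam C → (St ∩ C).Nonempty

/-- `D` is a weakly reasonable (ultra)filter on `lam`. -/
def WeaklyReasonable (lam : Cardinal.{0}) (D : Set (Set Ordinal.{0})) : Prop :=
  ∀ f : Ordinal.{0} → Ordinal.{0},
    (∀ δ < lam.ord, f δ < lam.ord) →
    (∀ δ δ', δ ≤ δ' → δ' < lam.ord → f δ ≤ f δ') →
    (∀ β < lam.ord, ∃ δ < lam.ord, β ≤ f δ) →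
    ∃ C, IsClub lam C ∧ (⋃ δ ∈ C, Set.Ico δ (δ + f δ)) ∉ D

/-- `e` is the increasing enumeration of `C ∪ {0}` (in order type `lam`). -/
def IsEnum (lam : Cardinal.{0}) (C : Set Ordinal.{0}) (e : Ordinal.{0} → Ordinal.{0}) : Prop :=
  (∀ ξ η, ξ < η → η < lam.ord → e ξ < e η) ∧
    (∀ ξ < lam.ord, e ξ ∈ insert 0 C) ∧
    ∀ γ ∈ insert 0 C, ∃ ξ < lam.ord, e ξ = γ

/-- The quotient `D/C`, where `e` is the increasing enumeration of `C ∪ {0}`. -/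
def quotFil (lam : Cardinal.{0}) (D : Set (Set Ordinal.{0})) (e : Ordinal.{0} → Ordinal.{0}) :
    Set (Set Ordinal.{0}) :=
  {A | A ⊆ Set.Iio lam.ord ∧ (⋃ ξ ∈ A, Set.Ico (e ξ) (e (ξ + 1))) ∈ D}

/-- `d` is an increasing continuous sequence of ordinals below `lam` (indexed by `ξ < lam`). -/
def IncrCont (lam : Cardinal.{0}) (d : Ordinal.{0} → Ordinal.{0}) : Prop :=
  (∀ ξ < lam.ord, d ξ < lam.ord) ∧
    (∀ ξ η, ξ < η → η < lam.ord → d ξ < d η) ∧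
    ∀ δ, δ < lam.ord → Order.IsSuccLimit δ → ∀ β < d δ, ∃ ξ < δ, β ≤ d ξ

/-- The full system `𝓕^ult` of local non-principal ultrafilters on `lam`. -/
def Fult (lam : Cardinal.{0}) : Set LocalFilter :=
  {t | t.a < lam.ord ∧ t.a ∈ t.Z ∧ t.Z ⊆ {o | t.a ≤ o ∧ o < lam.ord} ∧
      t.Z.Infinite ∧ #t.Z < Cardinal.lift.{1} lam ∧ IsUltraOn t.F t.Z ∧
      ∀ x : Ordinal.{0}, ({x} : Set Ordinal.{0}) ∉ t.F}

/-- `Σ(p)`. -/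
def SigmaP (lam : Cardinal.{0}) (p : Set LocalFilter) : Set LocalFilter :=
  {t | t ∈ Fult lam ∧ ∀ A ∈ t.F, ∃ s ∈ p, A ∩ s.Z ∈ s.F}

/-- A linked family `H ⊆ Q*_lam`. -/
def Linked (lam : Cardinal.{0}) (H : Set (Set LocalFilter)) : Prop :=
  H.Nonempty ∧ ∀ S : Set (Set LocalFilter), S ⊆ H → S.Finite → S.Nonempty →
    #{α : Ordinal.{0} | ∃ t : LocalFilter, t.a = α ∧ ∀ p ∈ S, t ∈ SigmaP lam p} =
      Cardinal.lift.{1} lam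

/-- A big family `H ⊆ Q*_lam`. -/
def Big (lam : Cardinal.{0}) (H : Set (Set LocalFilter)) : Prop :=
  H.Nonempty ∧ ∀ D ⊆ Fult lam, ∃ q ∈ H, q ⊆ D ∨ q ∩ D = ∅

/-- The condition `(⊕)^sum_S`. -/
def SumCond (lam : Cardinal.{0}) (S : Set LocalFilter) : Prop :=
  ∀ κ : Cardinal.{0}, ℵ₀ ≤ κ → κ < lam →
    ∀ t : Ordinal.{0} → LocalFilter,
      (∀ ξ < κ.ord, t ξ ∈ S) →
      (∀ ξ ζ, ξ < ζ → ζ < κ.ord → (t ξ).Z ⊆ Set.Iio (t ζ).a) →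
      ∃ E : Set (Set Ordinal.{0}), IsFilterOn E (Set.Iio κ.ord) ∧
        (∀ A ∈ E, #A = Cardinal.lift.{1} κ) ∧
        (LocalFilter.mk (t 0).a (⋃ ξ ∈ Set.Iio κ.ord, (t ξ).Z)
          (filSum (Set.Iio κ.ord) E (fun ξ => (t ξ).Z) (fun ξ => (t ξ).F))) ∈ S

/-- `(<lam⁺)`-completeness of a subfamily `Q` of `Q*` with respect to `≤*`. -/
def Complete (lam : Cardinal.{0}) (Q : Set (Set LocalFilter)) : Prop :=
  ∀ γ : Ordinal.{0}, γ.card ≤ lam →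
    ∀ p : Ordinal.{0} → Set LocalFilter,
      (∀ ξ < γ, p ξ ∈ Q) →
      (∀ ξ ζ, ξ ≤ ζ → ζ < γ → fil lam (p ξ) ⊆ fil lam (p ζ)) →
      ∃ q ∈ Q, ∀ ξ < γ, fil lam (p ξ) ⊆ fil lam q

/-- The full system `𝓕₀` of co-bounded filters on `lam`. -/
def Fcobdd (lam : Cardinal.{0}) : Set LocalFilter :=
  {t | t.a ∈ t.Z ∧ t.Z ⊆ {o | t.a ≤ o ∧ o < lam.ord} ∧
      #t.Z < Cardinal.lift.{1} lam ∧ sSup t.Z ∉ t.Z ∧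
      t.F = {A | A ⊆ t.Z ∧ ∃ β < sSup t.Z, ∀ x ∈ t.Z, β ≤ x → x ∈ A}}

/-- The `Ē`-closure of a system `S` of local filters (as an inductive family:
it is closed under `E κ`-sums of `κ`-sequences of previously obtained triples). -/
inductive EClos (lam : Cardinal.{0}) (E : Cardinal.{0} → Set (Set Ordinal.{0}))
    (S : Set LocalFilter) : LocalFilter → Prop
  | base : ∀ t ∈ S, EClos lam E S t
  | sum : ∀ κ : Cardinal.{0}, ℵ₀ ≤ κ → κ < lam →
      ∀ t : Ordinal.{0} → LocalFilter,
        (∀ ξ < κ.ord, EClos lam E S (t ξ)) →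
        (∀ ξ ζ, ξ < ζ → ζ < κ.ord → (t ξ).Z ⊆ Set.Iio (t ζ).a) →
        EClos lam E S (LocalFilter.mk (t 0).a (⋃ ξ ∈ Set.Iio κ.ord, (t ξ).Z)
          (filSum (Set.Iio κ.ord) (E κ) (fun ξ => (t ξ).Z) (fun ξ => (t ξ).F)))

/-- The full system `𝓕^unu` of local unultra filters on `lam`. -/
def Funu (lam : Cardinal.{0}) : Set LocalFilter :=
  {t | t.Z.Nonempty ∧ t.Z ⊆ Set.Iio lam.ord ∧ #t.Z < Cardinal.lift.{1} lam ∧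
      IsLeast t.Z t.a ∧ IsFilterOn t.F t.Z ∧ Unultra t.F t.Z}

/-- A pararegularity system for `F` (on `Z`), indexed by finite subsets of `κ`. -/
def PRSystem (κ : Cardinal.{0}) (F : Set (Set Ordinal.{0})) (Z : Set Ordinal.{0}) : Prop :=
  ∃ A : Finset Ordinal.{0} → Set Ordinal.{0},
    (∀ u : Finset Ordinal.{0}, ↑u ⊆ Set.Iio κ.ord → A u ∈ F) ∧
    (∀ u v : Finset Ordinal.{0}, ↑v ⊆ Set.Iio κ.ord → u ⊆ v → A v ⊆ A u) ∧
    (∀ U : Set Ordinal.{0}, U ⊆ Set.Iio κ.ord → U.Infinite →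
      (⋂ ξ ∈ U, A {ξ}) = ∅) ∧
    F = {B | B ⊆ Z ∧ ∃ u : Finset Ordinal.{0}, ↑u ⊆ Set.Iio κ.ord ∧ A u ⊆ B}

/-- `F` is a pararegular filter on `Z` (with `α = min Z`). -/
def Pararegular (lam : Cardinal.{0}) (F : Set (Set Ordinal.{0})) (Z : Set Ordinal.{0})
    (α : Ordinal.{0}) : Prop :=
  ∃ κ : Cardinal.{0}, (Ordinal.omega0 + α).card ≤ κ ∧ κ < lam ∧ PRSystem κ F Z

/-- `F` is a strongly pararegular filter on `Z` (with `α = min Z`). -/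
def StronglyPararegular (lam : Cardinal.{0}) (F : Set (Set Ordinal.{0})) (Z : Set Ordinal.{0})
    (α : Ordinal.{0}) : Prop :=
  ∃ κ : Cardinal.{0}, 2 ^ (Ordinal.omega0 + α).card ≤ κ ∧ κ < lam ∧ PRSystem κ F Z

/-- The full system `𝓕^pr` of local pararegular filters on `lam`. -/
def Fpr (lam : Cardinal.{0}) : Set LocalFilter :=
  {t | t.Z.Infinite ∧ t.Z ⊆ Set.Iio lam.ord ∧ #t.Z < Cardinal.lift.{1} lam ∧
      IsLeast t.Z t.a ∧ IsFilterOn t.F t.Z ∧ Pararegular lam t.F t.Z t.a}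

/-- The full system `𝓕^spr` of local strongly pararegular filters on `lam`. -/
def Fspr (lam : Cardinal.{0}) : Set LocalFilter :=
  {t | t.Z.Infinite ∧ t.Z ⊆ Set.Iio lam.ord ∧ #t.Z < Cardinal.lift.{1} lam ∧
      IsLeast t.Z t.a ∧ IsFilterOn t.F t.Z ∧ StronglyPararegular lam t.F t.Z t.a}

/-- The space `^lam lam`. -/
def Fn (lam : Cardinal.{0}) : Type 1 := ↥(Set.Iio lam.ord) → ↥(Set.Iio lam.ord)

/-- The basic open set `O_s` determined by a partial function `s` of length `γ`. -/
def basicOpen (lam : Cardinal.{0}) (γ : Ordinal.{0}) (s : Ordinal.{0} → Ordinal.{0}) : Set (Fn lam) :=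
  {f | ∀ ξ : ↥(Set.Iio lam.ord), (ξ : Ordinal.{0}) < γ → ((f ξ : Ordinal.{0}) = s ξ)}

/-- `X ⊆ ^lam lam` is nowhere dense. -/
def NwDense (lam : Cardinal.{0}) (X : Set (Fn lam)) : Prop :=
  ∀ γ < lam.ord, ∀ s : Ordinal.{0} → Ordinal.{0}, (∀ ξ < γ, s ξ < lam.ord) →
    ∃ γ', γ ≤ γ' ∧ γ' < lam.ord ∧ ∃ s' : Ordinal.{0} → Ordinal.{0},
      (∀ ξ < γ', s' ξ < lam.ord) ∧ (∀ ξ < γ, s' ξ = s ξ) ∧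
      basicOpen lam γ' s' ∩ X = ∅

/-- `X` belongs to the ideal `M^lam_{lam,lam}`: it is covered by `lam` many
nowhere dense sets. -/
def MeagerSet (lam : Cardinal.{0}) (X : Set (Fn lam)) : Prop :=
  ∃ A : Ordinal.{0} → Set (Fn lam), (∀ ξ < lam.ord, NwDense lam (A ξ)) ∧
    X ⊆ ⋃ ξ ∈ Set.Iio lam.ord, A ξ

/-- `cov(M^lam_{lam,lam})`. -/
def covM (lam : Cardinal.{0}) : Cardinal.{1} :=
  sInf {c | ∃ 𝓐 : Set (Set (Fn lam)), (∀ X ∈ 𝓐, MeagerSet lam X) ∧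
    ⋃₀ 𝓐 = Set.univ ∧ #𝓐 = c}

/-- Nodes of trees of sequences of ordinals: a pair (level, function). -/
abbrev TNode : Type 1 := Ordinal.{0} × (Ordinal.{0} → Ordinal.{0})

/-- Truncation of a function below `γ` (with value `0` elsewhere). -/
def truncF (γ : Ordinal.{0}) (f : Ordinal.{0} → Ordinal.{0}) : Ordinal.{0} → Ordinal.{0} :=
  fun ξ => if ξ < γ then f ξ else 0

/-- `T` is a tree of height `lam` of (normalized) sequences of ordinals `< lam`. -/
def IsTree (lam : Cardinal.{0}) (T : Set TNode) : Prop :=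
  (∀ x ∈ T, x.1 < lam.ord ∧ (∀ ξ < x.1, x.2 ξ < lam.ord) ∧ x.2 = truncF x.1 x.2) ∧
    ∀ x ∈ T, ∀ γ ≤ x.1, (γ, truncF γ x.2) ∈ T

/-- The `γ`-th level of `T`. -/
def treeLevel (T : Set TNode) (γ : Ordinal.{0}) : Set TNode := {x | x ∈ T ∧ x.1 = γ}

/-- `T` is a `lam`-Kurepa tree: a tree of height `lam` all of whose levels are
nonempty of cardinality `< lam`. -/
def IsKurepaTree (lam : Cardinal.{0}) (T : Set TNode) : Prop :=
  IsTree lam T ∧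
    ∀ γ < lam.ord, (treeLevel T γ).Nonempty ∧
      #(treeLevel T γ) < Cardinal.lift.{1} lam

/-- The set of `lam`-branches of `T` (normalized functions all of whose proper
initial segments lie in `T`). -/
def branches (lam : Cardinal.{0}) (T : Set TNode) : Set (Ordinal.{0} → Ordinal.{0}) :=
  {f | f = truncF lam.ord f ∧ ∀ γ < lam.ord, (γ, truncF γ f) ∈ T}


section WeaklyReasonable

variable {lam : Cardinal.{0}}

theorem add_one_lt_ord (hlam : ℵ₀ ≤ lam) {ξ : Ordinal} (hξ : ξ < lam.ord) : ξ + 1 < lam.ord :=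
  (isSuccLimit_ord hlam).add_one_lt hξ

theorem add_lt_ord (hlam : ℵ₀ ≤ lam) {a b : Ordinal} (ha : a < lam.ord) (hb : b < lam.ord) :
    a + b < lam.ord :=
  Ordinal.isPrincipal_add_ord hlam ha hb

theorem IsFilterOn.mem_of_superset {α : Type*} {F : Set (Set α)} {Z A B : Set α}
    (hF : IsFilterOn F Z) (hA : A ∈ F) (hAB : A ⊆ B) (hB : B ⊆ Z) : B ∈ F :=
  hF.2.2.1 A hA B hAB hB

theorem biUnion_Ico_subset_Iio {C : Set Ordinal} {a b : Ordinal → Ordinal} {c : Ordinal}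
    (hb : ∀ x ∈ C, b x ≤ c) : ⋃ x ∈ C, Ico (a x) (b x) ⊆ Iio c :=
  iUnion₂_subset fun x hx => Ico_subset_Iio_self.trans (Iio_subset_Iio (hb x hx))

theorem IncrCont.strictMonoOn {d : Ordinal → Ordinal} (hd : IncrCont lam d) :
    StrictMonoOn d (Iio lam.ord) :=
  fun _ _ _ hη h => hd.2.1 _ _ h hη

theorem IncrCont.le_apply {d : Ordinal → Ordinal} (hd : IncrCont lam d) {ξ : Ordinal}
    (hξ : ξ < lam.ord) : ξ ≤ d ξ := by
  induction ξ using WellFoundedLT.induction with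
  | _ ξ ih =>
    by_contra! h
    exact (hd.2.1 _ _ h hξ).not_ge (ih _ h (h.trans hξ))

theorem IncrCont.isClub_image {d : Ordinal → Ordinal} (hd : IncrCont lam d) {C : Set Ordinal}
    (hC : IsClub lam C) : IsClub lam (d '' C) := by
  refine ⟨image_subset_iff.2 fun ξ hξ => hd.1 ξ (hC.1 hξ), fun β hβ => ?_,
    fun δ hδ hδ0 hlim => ?_⟩
  · obtain ⟨ξ, hξ, hβξ⟩ := hC.2.1 β hβ
    exact ⟨d ξ, mem_image_of_mem d hξ, hβξ.trans_le (hd.le_apply (hC.1 hξ))⟩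
  -- `δ = d η` for `η` the supremum of the points of `C` that `d` maps below `δ`
  set T := {ξ ∈ C | d ξ < δ}
  have hTδ : ∀ ξ ∈ T, ξ < δ := fun ξ hξ => (hd.le_apply (hC.1 hξ.1)).trans_lt hξ.2
  have hbdd : BddAbove T := ⟨δ, fun ξ hξ => (hTδ ξ hξ).le⟩
  have hcof : ∀ β < δ, ∃ ξ ∈ T, β < d ξ := by
    intro β hβ
    obtain ⟨_, ⟨ξ, hξ, rfl⟩, hβξ, hξδ⟩ := hlim β hβ
    exact ⟨ξ, ⟨hξ, hξδ⟩, hβξ⟩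
  have hnomax : ∀ ξ ∈ T, ∃ ξ' ∈ T, ξ < ξ' := by
    intro ξ hξ
    obtain ⟨ξ', hξ', h⟩ := hcof _ hξ.2
    exact ⟨ξ', hξ', (hd.strictMonoOn.lt_iff_lt (hC.1 hξ.1) (hC.1 hξ'.1)).1 h⟩
  obtain ⟨ξ₀, hξ₀, -⟩ := hcof 0 (pos_iff_ne_zero.2 hδ0)
  set η := sSup T
  have hTη : ∀ α < η, ∃ ξ ∈ T, α < ξ ∧ ξ < η := by
    intro α hα
    obtain ⟨ξ, hξ, hαξ⟩ := (lt_csSup_iff hbdd ⟨ξ₀, hξ₀⟩).1 hα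
    obtain ⟨ξ', hξ', hξξ'⟩ := hnomax ξ hξ
    exact ⟨ξ, hξ, hαξ, hξξ'.trans_le (le_csSup hbdd hξ')⟩
  have hηlt : η < lam.ord := (csSup_le ⟨ξ₀, hξ₀⟩ fun ξ hξ => (hTδ ξ hξ).le).trans_lt hδ
  have hη0 : η ≠ 0 := by
    obtain ⟨ξ', hξ', h⟩ := hnomax ξ₀ hξ₀
    exact (zero_le.trans_lt (h.trans_le (le_csSup hbdd hξ'))).ne'
  have hηC : η ∈ C := hC.2.2 η hηlt hη0 fun α hα =>
    let ⟨ξ, hξ, h⟩ := hTη α hα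
    ⟨ξ, hξ.1, h⟩
  have hηlim : Order.IsSuccLimit η :=
    ⟨not_isMin_iff_ne_bot.2 hη0, fun α hcov =>
      let ⟨_, _, hαξ, hξη⟩ := hTη α hcov.1
      hcov.2 hαξ hξη⟩
  refine ⟨η, hηC, le_antisymm ?_ ?_⟩
  · by_contra! h
    obtain ⟨ξ, hξη, hδξ⟩ := hd.2.2 η hηlt hηlim δ h
    obtain ⟨ξ', hξ', hξξ', -⟩ := hTη ξ hξη
    exact (hδξ.trans_lt ((hd.2.1 _ _ hξξ' (hC.1 hξ'.1)).trans hξ'.2)).false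
  · by_contra! h
    obtain ⟨ξ', hξ', hηξ'⟩ := hnomax η ⟨hηC, h⟩
    exact (hηξ'.trans_le (le_csSup hbdd hξ')).false

theorem IsEnum.mem {C : Set Ordinal} {e : Ordinal → Ordinal} (he : IsEnum lam C e) {ξ : Ordinal}
    (hξ : ξ < lam.ord) (h0 : e ξ ≠ 0) : e ξ ∈ C :=
  (he.2.1 ξ hξ).resolve_left h0

theorem IsEnum.incrCont {C : Set Ordinal} {e : Ordinal → Ordinal} (hC : IsClub lam C)
    (he : IsEnum lam C e) : IncrCont lam e := by
  have hlt : ∀ ξ < lam.ord, e ξ < lam.ord := fun ξ hξ =>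
    (he.2.1 ξ hξ).elim (fun h => h ▸ zero_le.trans_lt hξ) (fun h => hC.1 h)
  refine ⟨hlt, he.1, fun δ hδ hlim β hβ => ?_⟩
  by_contra! hsmall
  -- the supremum `s` of `e` below `δ` is a limit of points of `C`, so `s = e η` with `η ≥ δ`
  have hbdd : BddAbove (e '' Iio δ) := ⟨β, forall_mem_image.2 fun ξ hξ => (hsmall ξ hξ).le⟩
  set s := sSup (e '' Iio δ)
  have hs : ∀ ξ < δ, e ξ < e (ξ + 1) ∧ e (ξ + 1) ≤ s := fun ξ hξ =>
    ⟨he.1 _ _ (lt_add_one _) ((hlim.add_one_lt hξ).trans hδ),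
      le_csSup hbdd (mem_image_of_mem e (hlim.add_one_lt hξ))⟩
  have hsβ : s ≤ β :=
    csSup_le (image_nonempty.2 ⟨0, hlim.bot_lt⟩) (forall_mem_image.2 fun ξ hξ => (hsmall ξ hξ).le)
  have hlts : ∀ ξ < δ, e ξ < s := fun ξ hξ => (hs ξ hξ).1.trans_le (hs ξ hξ).2
  have hsC : s ∈ C := by
    refine hC.2.2 s (hsβ.trans_lt (hβ.trans (hlt δ hδ))) (zero_le.trans_lt (hlts 0 hlim.bot_lt)).ne'
      fun α hα => ?_
    obtain ⟨_, ⟨ξ, hξ, rfl⟩, hαξ⟩ := (lt_csSup_iff hbdd (image_nonempty.2 ⟨0, hlim.bot_lt⟩)).1 hα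
    have hξ1 := hlim.add_one_lt hξ
    exact ⟨e (ξ + 1), he.mem (hξ1.trans hδ) (zero_le.trans_lt (hs ξ hξ).1).ne',
      hαξ.trans (hs ξ hξ).1, hlts _ hξ1⟩
  obtain ⟨η, hη, hηs⟩ := he.2.2 s (Or.inr hsC)
  rcases lt_or_ge η δ with hηδ | hδη
  · exact (hηs ▸ hlts η hηδ).false
  · have hmono : MonotoneOn e (Iio lam.ord) := fun ξ _ η hη h =>
      h.eq_or_lt.elim (fun h => h ▸ le_rfl) fun h => (he.1 ξ η h hη).le
    exact ((hmono hδ hη hδη).trans (hηs.le.trans hsβ) |>.trans_lt hβ).false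

def closurePoints (lam : Cardinal.{0}) (f : Ordinal → Ordinal) : Set Ordinal :=
  {δ | δ < lam.ord ∧ 0 < δ ∧ ∀ β < δ, β + f β < δ}

theorem isClub_closurePoints (hreg : lam.IsRegular) (hunc : ℵ₀ < lam) {f : Ordinal → Ordinal}
    (hf : ∀ δ < lam.ord, f δ < lam.ord)
    (hmono : ∀ δ δ', δ ≤ δ' → δ' < lam.ord → f δ ≤ f δ') :
    IsClub lam (closurePoints lam f) := by
  refine ⟨fun δ hδ => hδ.1, fun β hβ => ?_,
    fun δ hδ hδ0 hlim => ⟨hδ, pos_iff_ne_zero.2 hδ0, fun β hβ => ?_⟩⟩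
  · -- the least fixed point above `β + 1` of the step `x ↦ x + f x + 1`
    set g : Ordinal → Ordinal := fun x => x + f x + 1
    have hg : ∀ x < lam.ord, g x < lam.ord := fun x hx =>
      add_one_lt_ord hreg.aleph0_le (add_lt_ord hreg.aleph0_le hx (hf x hx))
    set δ := Ordinal.nfp g (β + 1)
    have hδ : δ < lam.ord :=
      nfp_lt_ord_of_isRegular hreg hunc.ne' hg (add_one_lt_ord hreg.aleph0_le hβ)
    have hβδ : β < δ := (lt_add_one _).trans_le (Ordinal.le_nfp g _)
    refine ⟨δ, ⟨hδ, zero_le.trans_lt hβδ, fun β' hβ' => ?_⟩, hβδ⟩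
    obtain ⟨n, hn⟩ := Ordinal.lt_nfp_iff.1 hβ'
    set x := g^[n] (β + 1)
    have hx : x < lam.ord := (Ordinal.iterate_le_nfp g _ n).trans_lt hδ
    calc β' + f β' ≤ x + f x := add_le_add hn.le (hmono _ _ hn.le hx)
      _ < g x := lt_add_one _
      _ = g^[n + 1] (β + 1) := (Function.iterate_succ_apply' g n _).symm
      _ ≤ δ := Ordinal.iterate_le_nfp g _ _
  · obtain ⟨γ, hγ, hβγ, hγδ⟩ := hlim β hβ
    exact (hγ.2.2 β hβγ).trans hγδ

theorem exists_isEnum (hreg : lam.IsRegular) {C : Set Ordinal} (hC : C ⊆ Iio lam.ord)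
    (hunb : ∀ β < lam.ord, ∃ γ ∈ C, β < γ) : ∃ e, IsEnum lam C e := by
  -- padding with `[lam, ∞)` makes the set unbounded, so that `enumOrd` is strictly increasing
  set S := insert 0 C ∪ Ici lam.ord
  have hS : ¬ BddAbove S := not_bddAbove_iff.2 fun x =>
    ⟨max (x + 1) lam.ord, Or.inr (mem_Ici.2 (le_max_right _ _)),
      (lt_add_one _).trans_le (le_max_left _ _)⟩
  have hlt : ∀ ξ < lam.ord, Ordinal.enumOrd S ξ < lam.ord := by
    intro ξ
    induction ξ using WellFoundedLT.induction with
    | _ ξ ih =>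
      intro hξ
      have hsup : ⨆ η : Iio ξ, Ordinal.enumOrd S η + 1 < lam.ord := by
        refine Ordinal.lift_iSup_add_one_lt_of_lt_cof ?_ fun η => ih η η.2 (η.2.trans hξ)
        rw [Cardinal.lift_id', mk_Iio_ordinal, ← Ordinal.lift_cof, hreg.cof_ord, lift_lt, ← lt_ord]
        exact hξ
      obtain ⟨γ, hγ, hsupγ⟩ := hunb _ hsup
      refine (Ordinal.enumOrd_le_of_forall_lt (Or.inl (Or.inr hγ)) fun η hη => ?_).trans_lt (hC hγ)
      exact (lt_add_one _).trans_le
        ((Ordinal.le_iSup (fun η : Iio ξ => Ordinal.enumOrd S η + 1) ⟨η, hη⟩).trans hsupγ.le)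
  refine ⟨Ordinal.enumOrd S, fun ξ η h _ => Ordinal.enumOrd_strictMono hS h,
    fun ξ hξ => (Ordinal.enumOrd_mem hS ξ).resolve_right (hlt ξ hξ).not_ge, fun γ hγ => ?_⟩
  obtain ⟨ξ, rfl⟩ : γ ∈ range (Ordinal.enumOrd S) := (Ordinal.range_enumOrd hS).symm ▸ Or.inl hγ
  have hγlt : Ordinal.enumOrd S ξ < lam.ord :=
    hγ.elim (fun h => h ▸ ord_pos.2 hreg.pos) (fun h => hC h)
  exact ⟨ξ, (Ordinal.le_enumOrd_self hS).trans_lt hγlt, rfl⟩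

theorem IncrCont.biUnion_Ico_subset {d : Ordinal → Ordinal} (hd : IncrCont lam d)
    {C : Set Ordinal} (hC : C ⊆ Iio lam.ord) :
    ⋃ ξ ∈ C, Ico (d ξ) (d (ξ + 1)) ⊆ ⋃ δ ∈ C, Ico δ (δ + d (δ + 1)) :=
  biUnion_mono subset_rfl fun _ hξ =>
    Ico_subset_Ico (hd.le_apply (hC hξ)) le_add_self

theorem IsEnum.biUnion_Ico_add_subset (hlam : ℵ₀ ≤ lam) {f e : Ordinal → Ordinal}
    (he : IsEnum lam (closurePoints lam f) e) {C A : Set Ordinal} (hCA : C ⊆ A)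
    (hA : A ⊆ Iio lam.ord) :
    ⋃ δ ∈ e '' C, Ico δ (δ + f δ) ⊆ ⋃ ξ ∈ A, Ico (e ξ) (e (ξ + 1)) := by
  rw [biUnion_image]
  refine biUnion_mono hCA fun ξ hξ => Ico_subset_Ico_right ?_
  have hξ1 : ξ + 1 < lam.ord := add_one_lt_ord hlam (hA hξ)
  have hlt : e ξ < e (ξ + 1) := he.1 _ _ (lt_add_one _) hξ1
  exact ((he.mem hξ1 (zero_le.trans_lt hlt).ne').2.2 _ hlt).le

def ExtendsClubFilter (lam : Cardinal.{0}) (F : Set (Set Ordinal.{0})) : Prop :=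
  ∀ A ⊆ Iio lam.ord, (∃ C', IsClub lam C' ∧ C' ⊆ A) → A ∈ F

variable {D : Set (Set Ordinal.{0})}

theorem WeaklyReasonable.exists_isClub_biUnion_Ico_notMem (hlam : ℵ₀ ≤ lam)
    (hD : IsFilterOn D (Iio lam.ord)) (hA : WeaklyReasonable lam D) {d : Ordinal → Ordinal}
    (hd : IncrCont lam d) : ∃ C, IsClub lam C ∧ (⋃ ξ ∈ C, Ico (d ξ) (d (ξ + 1))) ∉ D := by
  have hd1 : ∀ δ < lam.ord, d (δ + 1) < lam.ord := fun δ hδ => hd.1 _ (add_one_lt_ord hlam hδ)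
  obtain ⟨C, hC, hCD⟩ := hA (fun δ => d (δ + 1)) hd1
    (fun δ δ' h hδ' => hd.strictMonoOn.monotoneOn
      (add_one_lt_ord hlam (h.trans_lt hδ')) (add_one_lt_ord hlam hδ') (add_le_add_left h 1))
    (fun β hβ => ⟨β, hβ, le_self_add.trans (hd.le_apply (add_one_lt_ord hlam hβ))⟩)
  refine ⟨C, hC, fun hmem => hCD (hD.mem_of_superset hmem (hd.biUnion_Ico_subset hC.1) ?_)⟩
  exact biUnion_Ico_subset_Iio fun δ hδ => (add_lt_ord hlam (hC.1 hδ) (hd1 δ (hC.1 hδ))).le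

theorem not_extendsClubFilter_quotFil
    (hB : ∀ d : Ordinal → Ordinal, IncrCont lam d →
      ∃ C, IsClub lam C ∧ (⋃ ξ ∈ C, Ico (d ξ) (d (ξ + 1))) ∉ D)
    {C : Set Ordinal} (hC : IsClub lam C) {e : Ordinal → Ordinal} (he : IsEnum lam C e) :
    ¬ ExtendsClubFilter lam (quotFil lam D e) := fun hext =>
  let ⟨C', hC', hC'D⟩ := hB e (he.incrCont hC)
  hC'D (hext C' hC'.1 ⟨C', hC', subset_rfl⟩).2

theorem weaklyReasonable_of_forall_not_extendsClubFilter (hreg : lam.IsRegular)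
    (hunc : ℵ₀ < lam) (hD : IsFilterOn D (Iio lam.ord))
    (hC : ∀ C, IsClub lam C → ∀ e, IsEnum lam C e → ¬ ExtendsClubFilter lam (quotFil lam D e)) :
    WeaklyReasonable lam D := by
  intro f hf hmono _
  by_contra! hall
  have hE := isClub_closurePoints hreg hunc hf hmono
  obtain ⟨e, he⟩ := exists_isEnum hreg hE.1 hE.2.1
  have hie := he.incrCont hE
  refine hC _ hE e he fun A hA ⟨C', hC', hC'A⟩ =>
    ⟨hA, hD.mem_of_superset (hall _ (hie.isClub_image hC'))
      (he.biUnion_Ico_add_subset hreg.aleph0_le hC'A hA) ?_⟩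
  exact biUnion_Ico_subset_Iio fun ξ hξ => (hie.1 _ (add_one_lt_ord hreg.aleph0_le (hA hξ))).le

end WeaklyReasonable

theorem stmt0_general (lam : Cardinal.{0}) (hreg : lam.IsRegular) (hunc : ℵ₀ < lam)
    (D : Set (Set Ordinal.{0}))
    (hD : IsUltraOn D (Set.Iio lam.ord)) :
    (WeaklyReasonable lam D ↔
      ∀ d : Ordinal.{0} → Ordinal.{0}, IncrCont lam d →
        ∃ C, IsClub lam C ∧ (⋃ ξ ∈ C, Set.Ico (d ξ) (d (ξ + 1))) ∉ D) ∧
    (WeaklyReasonable lam D ↔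
      ∀ C, IsClub lam C → ∀ e, IsEnum lam C e →
        ¬ ∀ A ⊆ Set.Iio lam.ord,
            (∃ C', IsClub lam C' ∧ C' ⊆ A) → A ∈ quotFil lam D e) := by
  have hAB := fun hA (d : Ordinal → Ordinal) (hd : IncrCont lam d) =>
    WeaklyReasonable.exists_isClub_biUnion_Ico_notMem hreg.aleph0_le hD.1 hA hd
  have hBC := fun hB C (hC : IsClub lam C) e (he : IsEnum lam C e) =>
    not_extendsClubFilter_quotFil (D := D) hB hC he
  have hCA := weaklyReasonable_of_forall_not_extendsClubFilter hreg hunc hD.1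
  exact ⟨⟨hAB, fun hB => hCA (hBC hB)⟩, fun hA => hBC (hAB hA), hCA⟩

/-- Observation 1.2: for a uniform ultrafilter `D` on an uncountable regular cardinal `lam`,
weak reasonability is equivalent to conditions (B) and (C). -/
theorem stmt0 (lam : Cardinal.{0}) (hreg : lam.IsRegular) (hunc : ℵ₀ < lam)
    (D : Set (Set Ordinal.{0}))
    (hD : IsUltraOn D (Set.Iio lam.ord)) (hU : IsUniform lam D) :
    (WeaklyReasonable lam D ↔
      ∀ d : Ordinal.{0} → Ordinal.{0}, IncrCont lam d →
        ∃ C, IsClub lam C ∧ (⋃ ξ ∈ C, Set.Ico (d ξ) (d (ξ + 1))) ∉ D) ∧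
    (WeaklyReasonable lam D ↔
      ∀ C, IsClub lam C → ∀ e, IsEnum lam C e →
        ¬ ∀ A ⊆ Set.Iio lam.ord,
            (∃ C', IsClub lam C' ∧ C' ⊆ A) → A ∈ quotFil lam D e) :=
  stmt0_general lam hreg hunc D hD

end

end RS889
end

section
/- Let 𝓕 be a system of local filters on λ and p, q ∈ Q*_λ(𝓕). Then p ≤* q if and only if there is ε < λ such that for every (α,Z,F) ∈ q with α > ε and every A ∈ F⁺ there is (α',Z',F') ∈ p with A ∩ Z' ∈ (F')⁺. -/
namespace RS889

noncomputable section

open Cardinal Set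

universe u v

/-!
(⇐) If `A ∈ fil p` with threshold `ε₁` but `A ∩ Z ∉ F` for some late `(α, Z, F) ∈ q`, then
`Z \ A` is `F`-positive, hence positive on some `(α', Z', F') ∈ p`. Fewer than `lam` members
of `p` have `α' < ε₁`, so `Z` lies above all of their `Z'`; thus `α' ≥ ε₁` and `A ∩ Z' ∈ F'`,
contradicting positivity.

(⇒) If the condition fails, pick for every `ε < lam` a triple `t_ε ∈ q` above `ε` with a set
`B_ε ∈ t_ε.F⁺` that is null for every member of `p`. Choose an unbounded set `D` of indices so
sparse that each `Z'` with `(α', Z', F') ∈ p` meets `B_δ` for at most two `δ ∈ D`. Then `lam \ ⋃_{δ ∈ D} B_δ`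
belongs to `fil p`, but it is disjoint from every `B_δ` and so does not belong to `fil q`.
-/

theorem subsingleton_of_forall_not_lt {α : Type*} [LinearOrder α] {s : Set α}
    (h : ∀ x ∈ s, ∀ y ∈ s, ¬x < y) : s.Subsingleton := fun x hx y hy =>
  le_antisymm (not_lt.1 (h y hy x hx)) (not_lt.1 (h x hx y hy))

/-- At most one such `δ` lies below `a`, and at most one above it. -/
theorem finite_of_sparse {α : Type*} [LinearOrder α] {D Z : Set α} {g : α → α} {a : α}
    (hD : ∀ δ ∈ D, ∀ δ' ∈ D, δ < δ' → g δ ≤ δ') (ha : ∀ x ∈ Z, a ≤ x)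
    (hg : ∀ ε ∈ D, a ≤ ε → ∀ x ∈ Z, x < g ε) :
    {δ ∈ D | ∃ x ∈ Z, δ < x ∧ x < g δ}.Finite := by
  set J := {δ ∈ D | ∃ x ∈ Z, δ < x ∧ x < g δ}
  have hlow : (J ∩ Iio a).Subsingleton := by
    refine subsingleton_of_forall_not_lt ?_
    rintro δ₁ ⟨⟨hδ₁, x₁, hx₁, -, hx₁g⟩, -⟩ δ₂ ⟨⟨hδ₂, -⟩, hδ₂a⟩ hlt
    exact lt_asymm (((ha x₁ hx₁).trans_lt hx₁g).trans_le (hD δ₁ hδ₁ δ₂ hδ₂ hlt)) hδ₂a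
  have hhigh : (J ∩ Ici a).Subsingleton := by
    refine subsingleton_of_forall_not_lt ?_
    rintro δ₂ ⟨⟨hδ₂, -⟩, hδ₂a⟩ δ₃ ⟨⟨hδ₃, x₃, hx₃, hδ₃x, -⟩, -⟩ hlt
    exact lt_asymm ((hg δ₂ hδ₂ hδ₂a x₃ hx₃).trans_le (hD δ₂ hδ₂ δ₃ hδ₃ hlt)) hδ₃x
  exact (hlow.finite.union hhigh.finite).subset fun δ hδ =>
    (lt_or_ge δ a).imp (⟨hδ, ·⟩) (⟨hδ, ·⟩)

section FilterOn

variable {α : Type u} {F : Set (Set α)} {Z : Set α}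

theorem IsFilterOn.diff_mem_posOf (hF : IsFilterOn F Z) {A : Set α} (hA : A ∩ Z ∉ F) :
    Z \ A ∈ posOf F Z := by
  refine ⟨sdiff_subset, fun C hC => ?_⟩
  by_contra hCA
  refine hA (hF.2.2.1 C hC _ (fun x hx => ⟨?_, hF.1 C hC hx⟩) inter_subset_right)
  by_contra hxA
  exact hCA ⟨x, ⟨hF.1 C hC hx, hxA⟩, hx⟩

theorem IsFilterOn.exists_disjoint_of_inter_notMem_posOf (hF : IsFilterOn F Z) {B : Set α}
    (hB : B ∩ Z ∉ posOf F Z) : ∃ C ∈ F, Disjoint B C := by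
  by_contra! h
  refine hB ⟨inter_subset_right, fun C hC => ?_⟩
  obtain ⟨x, hxB, hxC⟩ := not_disjoint_iff.1 (h C hC)
  exact ⟨x, ⟨hxB, hF.1 C hC hxC⟩, hxC⟩

theorem IsFilterOn.exists_disjoint_biUnion (hF : IsFilterOn F Z) {ι : Type*} {K : Set ι}
    (hK : K.Finite) {B : ι → Set α} (hB : ∀ i ∈ K, ∃ C ∈ F, Disjoint (B i) C) :
    ∃ C ∈ F, Disjoint (⋃ i ∈ K, B i) C := by
  induction K, hK using Set.Finite.induction_on with
  | empty => exact ⟨Z, hF.2.1, by simp⟩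
  | @insert i K _ _ ih =>
    obtain ⟨C₁, hC₁, h₁⟩ := hB i (mem_insert i K)
    obtain ⟨C₂, hC₂, h₂⟩ := ih fun j hj => hB j (mem_insert_of_mem i hj)
    refine ⟨C₁ ∩ C₂, hF.2.2.2.1 C₁ hC₁ C₂ hC₂, ?_⟩
    rw [biUnion_insert, disjoint_union_left]
    exact ⟨h₁.mono_right inter_subset_left, h₂.mono_right inter_subset_right⟩

theorem IsFilterOn.diff_biUnion_inter_mem (hF : IsFilterOn F Z) {X : Set α} (hZX : Z ⊆ X)
    {ι : Type*} {D : Set ι} {B : ι → Set α} (hfin : {i ∈ D | (B i ∩ Z).Nonempty}.Finite)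
    (hB : ∀ i ∈ D, B i ∩ Z ∉ posOf F Z) : (X \ ⋃ i ∈ D, B i) ∩ Z ∈ F := by
  obtain ⟨C, hC, hCdisj⟩ := hF.exists_disjoint_biUnion hfin fun i hi =>
    hF.exists_disjoint_of_inter_notMem_posOf (hB i hi.1)
  refine hF.2.2.1 C hC _ (fun x hxC => ?_) inter_subset_right
  have hxZ : x ∈ Z := hF.1 C hC hxC
  refine ⟨⟨hZX hxZ, ?_⟩, hxZ⟩
  simp only [mem_iUnion, not_exists]
  exact fun i hi hxB => hCdisj.ne_of_mem (mem_biUnion ⟨hi, x, hxB, hxZ⟩ hxB) hxC rfl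

end FilterOn

section Regular

variable {lam : Cardinal.{0}}

theorem exists_lt_ord_forall_lt (hreg : lam.IsRegular) {W : Set Ordinal.{0}}
    (hW : W ⊆ Iio lam.ord) (hcard : #W < Cardinal.lift.{1} lam) :
    ∃ β < lam.ord, ∀ z ∈ W, z < β := by
  have hcof : #W < (Ordinal.lift.{1} lam.ord).cof := by
    rwa [Cardinal.lift_ord, hreg.lift.cof_ord]
  refine ⟨_, Ordinal.sSup_add_one_lt_of_lt_cof hcof hW, fun z hz => ?_⟩
  refine (lt_add_one z).trans_le (le_csSup ⟨lam.ord, ?_⟩ (mem_image_of_mem _ hz))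
  rintro _ ⟨y, hy, rfl⟩
  exact Order.add_one_le_of_lt (hW hy)

theorem mk_Iic_lt_lift (hreg : lam.IsRegular) {ε : Ordinal.{0}} (hε : ε < lam.ord) :
    #(Iic ε) < Cardinal.lift.{1} lam := by
  rw [← Order.Iio_succ, Cardinal.mk_Iio_ordinal, Cardinal.lift_lt, ← Cardinal.lt_ord]
  exact (Cardinal.isSuccLimit_ord hreg.aleph0_le).succ_lt hε

/-- A maximal `g`-sparse `D` is unbounded: a bounded one has size `< lam`, so by regularity it
can be extended by a point above `g '' D`. -/
theorem exists_unbounded_sparse (hreg : lam.IsRegular) {g : Ordinal.{0} → Ordinal.{0}}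
    (hg : ∀ δ < lam.ord, g δ < lam.ord) :
    ∃ D ⊆ Iio lam.ord, (∀ β < lam.ord, ∃ δ ∈ D, β ≤ δ) ∧
      ∀ δ ∈ D, ∀ δ' ∈ D, δ < δ' → g δ ≤ δ' := by
  set S : Set (Set Ordinal.{0}) :=
    {D | D ⊆ Iio lam.ord ∧ ∀ δ ∈ D, ∀ δ' ∈ D, δ < δ' → g δ ≤ δ'}
  obtain ⟨D, ⟨hDlt, hDsparse⟩, hmax⟩ : ∃ D, Maximal (· ∈ S) D := by
    refine zorn_subset S fun c hcS hc => ⟨⋃₀ c, ⟨?_, ?_⟩, fun D hD => subset_sUnion_of_mem hD⟩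
    · exact sUnion_subset fun D hD => (hcS hD).1
    · rintro δ ⟨D, hD, hδ⟩ δ' ⟨D', hD', hδ'⟩
      rcases hc.total hD hD' with h | h
      · exact (hcS hD').2 δ (h hδ) δ' hδ'
      · exact (hcS hD).2 δ hδ δ' (h hδ')
  refine ⟨D, hDlt, fun β hβ => ?_, hDsparse⟩
  by_contra! hbdd
  have hcard : #(insert β (g '' D) : Set Ordinal.{0}) < Cardinal.lift.{1} lam := by
    have hD : #D < Cardinal.lift.{1} lam :=
      (Cardinal.mk_le_mk_of_subset fun δ hδ => (hbdd δ hδ).le).trans_lt (mk_Iic_lt_lift hreg hβ)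
    exact (Cardinal.mk_insert_le.trans (add_le_add_left Cardinal.mk_image_le 1)).trans_lt
      (Cardinal.add_lt_of_lt hreg.lift.aleph0_le hD
        (Cardinal.one_lt_aleph0.trans_le hreg.lift.aleph0_le))
  obtain ⟨γ, hγ, hγW⟩ := exists_lt_ord_forall_lt hreg
    (insert_subset hβ (image_subset_iff.2 fun δ hδ => hg δ (hDlt hδ))) hcard
  have hβγ : β < γ := hγW β (mem_insert β _)
  have hgγ : ∀ δ ∈ D, g δ ≤ γ := fun δ hδ => (hγW _ (mem_insert_of_mem β ⟨δ, hδ, rfl⟩)).le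
  have hext : insert γ D ∈ S := by
    refine ⟨insert_subset hγ hDlt, ?_⟩
    rintro δ (rfl | hδ) δ' (rfl | hδ') hlt
    · exact absurd hlt (lt_irrefl _)
    · exact absurd ((hbdd δ' hδ').trans hβγ) (lt_asymm hlt)
    · exact hgγ δ hδ
    · exact hDsparse δ hδ δ' hδ' hlt
  exact lt_asymm (hbdd γ (hmax hext (subset_insert γ D) (mem_insert γ D))) hβγ

theorem exists_bound_of_mem_Qstar (hreg : lam.IsRegular) {F r : Set LocalFilter}
    (hF : IsLFS lam F) (hr : r ∈ Qstar lam F) {ε : Ordinal.{0}} (hε : ε < lam.ord) :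
    ∃ β < lam.ord, ∀ s ∈ r, s.a ≤ ε → ∀ z ∈ s.Z, z < β := by
  obtain ⟨hrF, -, hlevel⟩ := hr
  set P := {s | s ∈ r ∧ s.a ≤ ε}
  have hP : #P < Cardinal.lift.{1} lam := by
    have hsub : P ⊆ ⋃ ξ ∈ Iic ε, {s | s ∈ r ∧ s.a = ξ} := fun s hs =>
      mem_biUnion hs.2 ⟨hs.1, rfl⟩
    exact (Cardinal.mk_le_mk_of_subset hsub).trans_lt
      ((Cardinal.card_biUnion_lt_iff_forall_of_isRegular hreg.lift
        (mk_Iic_lt_lift hreg hε)).2 fun ξ _ => hlevel ξ)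
  obtain ⟨β, hβ, hβW⟩ := exists_lt_ord_forall_lt hreg (W := ⋃ s ∈ P, s.Z)
    (iUnion₂_subset fun s hs => (hF.1 s (hrF hs.1)).1)
    ((Cardinal.card_biUnion_lt_iff_forall_of_isRegular hreg.lift hP).2 fun s hs =>
      (hF.1 s (hrF hs.1)).2.1)
  exact ⟨β, hβ, fun s hs hsa z hz => hβW z (mem_biUnion ⟨hs, hsa⟩ hz)⟩

theorem fil_subset_fil_of_forall_posOf (hreg : lam.IsRegular) {F p q : Set LocalFilter}
    (hF : IsLFS lam F) (hp : p ∈ Qstar lam F) (hq : q ⊆ F) {ε₀ : Ordinal.{0}}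
    (hε₀ : ε₀ < lam.ord)
    (hpos : ∀ t ∈ q, ε₀ < t.a → ∀ A ∈ posOf t.F t.Z, ∃ s ∈ p, A ∩ s.Z ∈ posOf s.F s.Z) :
    fil lam p ⊆ fil lam q := by
  rintro A ⟨hA, ε₁, hε₁, hAp⟩
  obtain ⟨β, hβ, hβp⟩ := exists_bound_of_mem_Qstar hreg hF hp hε₁
  have hlim := Cardinal.isSuccLimit_ord hreg.aleph0_le
  refine ⟨hA, max (max ε₀ ε₁) β + 1, hlim.succ_lt (max_lt (max_lt hε₀ hε₁) hβ), fun t ht hta => ?_⟩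
  obtain ⟨⟨hε₀t, -⟩, hβt⟩ : (ε₀ < t.a ∧ ε₁ < t.a) ∧ β < t.a := by
    simpa only [max_lt_iff] using Order.add_one_le_iff.1 hta
  obtain ⟨-, -, htleast, htF⟩ := hF.1 t (hq ht)
  by_contra hAt
  obtain ⟨s, hs, hsA⟩ := hpos t ht hε₀t _ (htF.diff_mem_posOf hAt)
  obtain ⟨-, -, -, hsF⟩ := hF.1 s (hp.1 hs)
  rcases lt_or_ge s.a ε₁ with hsa | hsa
  · -- `s.Z` lies below `β ≤ min t.Z`, so it cannot meet `t.Z`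
    obtain ⟨x, ⟨⟨hxt, -⟩, hxs⟩, -⟩ := hsA.2 s.Z hsF.2.1
    exact lt_asymm (hβp s hs hsa.le x hxs) (hβt.trans_le (htleast.2 hxt))
  · obtain ⟨x, ⟨⟨-, hxA⟩, -⟩, hxA', -⟩ := hsA.2 _ (hAp s hs hsa)
    exact hxA hxA'

theorem exists_forall_posOf_of_fil_subset_fil (hreg : lam.IsRegular) {F p q : Set LocalFilter}
    (hF : IsLFS lam F) (hp : p ∈ Qstar lam F) (hq : q ⊆ F) (hpq : fil lam p ⊆ fil lam q) :
    ∃ ε < lam.ord, ∀ t ∈ q, ε < t.a →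
      ∀ A ∈ posOf t.F t.Z, ∃ s ∈ p, A ∩ s.Z ∈ posOf s.F s.Z := by
  by_contra! hno
  have : Nonempty LocalFilter := ⟨⟨0, ∅, ∅⟩⟩
  choose! T hTq hTa B hBpos hBnull using hno
  have hbound : ∀ δ < lam.ord, ∃ β < lam.ord,
      (∀ z ∈ (T δ).Z, z < β) ∧ ∀ s ∈ p, s.a ≤ δ → ∀ z ∈ s.Z, z < β := by
    intro δ hδ
    obtain ⟨hTZ, hTcard, -⟩ := hF.1 _ (hq (hTq δ hδ))
    obtain ⟨β₁, hβ₁, hTβ₁⟩ := exists_lt_ord_forall_lt hreg hTZ hTcard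
    obtain ⟨β₂, hβ₂, hpβ₂⟩ := exists_bound_of_mem_Qstar hreg hF hp hδ
    exact ⟨max β₁ β₂, max_lt hβ₁ hβ₂, fun z hz => lt_max_of_lt_left (hTβ₁ z hz),
      fun s hs hsa z hz => lt_max_of_lt_right (hpβ₂ s hs hsa z hz)⟩
  choose! g hg hTg hpg using hbound
  obtain ⟨D, hDlt, hDunb, hDsparse⟩ := exists_unbounded_sparse hreg hg
  set A := Iio lam.ord \ ⋃ δ ∈ D, B δ
  have hAp : A ∈ fil lam p := by
    refine ⟨sdiff_subset, 0, Cardinal.ord_pos.2 (Cardinal.aleph0_pos.trans_le hreg.aleph0_le),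
      fun s hs _ => ?_⟩
    obtain ⟨hsZ, -, hsleast, hsF⟩ := hF.1 s (hp.1 hs)
    refine hsF.diff_biUnion_inter_mem hsZ ((finite_of_sparse hDsparse hsleast.2
      fun ε hε hsε => hpg ε (hDlt hε) s hs hsε).subset ?_) fun δ hδ => hBnull δ (hDlt hδ) s hs
    rintro δ ⟨hδ, x, hxB, hxs⟩
    have hxT : x ∈ (T δ).Z := (hBpos δ (hDlt hδ)).1 hxB
    have hTmin := (hF.1 _ (hq (hTq δ (hDlt hδ)))).2.2.1
    exact ⟨hδ, x, hxs, (hTa δ (hDlt hδ)).trans_le (hTmin.2 hxT), hTg δ (hDlt hδ) x hxT⟩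
  obtain ⟨-, ε, hε, hAq⟩ := hpq hAp
  obtain ⟨δ, hδD, hεδ⟩ := hDunb ε hε
  obtain ⟨x, hxB, hxA⟩ := (hBpos δ (hDlt hδD)).2 _
    (hAq _ (hTq δ (hDlt hδD)) (hεδ.trans (hTa δ (hDlt hδD)).le))
  exact hxA.1.2 (mem_biUnion hδD hxB)

end Regular

theorem stmt1_general (lam : Cardinal.{0}) (hreg : lam.IsRegular)
    (F : Set LocalFilter) (hF : IsLFS lam F)
    (p q : Set LocalFilter) (hp : p ∈ Qstar lam F) (hq : q ∈ Qstar lam F) :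
    fil lam p ⊆ fil lam q ↔
      ∃ ε < lam.ord, ∀ t ∈ q, ε < t.a →
        ∀ A ∈ posOf t.F t.Z, ∃ s ∈ p, (A ∩ s.Z) ∈ posOf s.F s.Z :=
  ⟨exists_forall_posOf_of_fil_subset_fil hreg hF hp hq.1,
    fun ⟨_, hε, hpos⟩ => fil_subset_fil_of_forall_posOf hreg hF hp hq.1 hε hpos⟩

/-- Proposition 1.5(1). -/
theorem stmt1 (lam : Cardinal.{0}) (hreg : lam.IsRegular) (hunc : ℵ₀ < lam)
    (F : Set LocalFilter) (hF : IsLFS lam F)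
    (p q : Set LocalFilter) (hp : p ∈ Qstar lam F) (hq : q ∈ Qstar lam F) :
    fil lam p ⊆ fil lam q ↔
      ∃ ε < lam.ord, ∀ t ∈ q, ε < t.a →
        ∀ A ∈ posOf t.F t.Z, ∃ s ∈ p, (A ∩ s.Z) ∈ posOf s.F s.Z :=
  stmt1_general lam hreg F hF p q hp hq

end

end RS889
end

section
/- Let 𝓕₀ be the full system of co-bounded filters on λ, consisting of all triples (α,Z,F) such that α ∈ Z ⊆ λ∖α, |Z| < λ, sup(Z) ∉ Z, and F is the filter of co-bounded subsets of Z. Then there exists a ≤*-increasing sequence ⟨p_n : n < ω⟩ of members of Q⁰_λ(𝓕₀) which has no ≤*-upper bound in Q*_λ(𝓕₀). -/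
namespace RS889

noncomputable section

open Cardinal Set

universe u v

/-!
The sequence `pSeq lam n` consists of the blocks `[ω·β, ω·β + ω)` with `β % ω ≥ n`, each
carrying its co-bounded filter; it decreases in `n`, so its filter increases. If `q` were an
upper bound, `fil q` would contain every column set `{x | n ≤ (x / ω) % ω}`, so that beyond some
`ε` every member of `q` meets blocks cofinally below the supremum of its support. Choose a
cofinal subfamily `T ⊆ q` whose members meet pairwise disjoint sets of blocks, and delete from
every block the least point covered by `T`. What is left is co-bounded in every block, hence
lies in `fil (pSeq lam 0) ⊆ fil q`; but a late member of `T` loses the least point of each block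
it meets, so the set is not co-bounded in its support.
-/

open Ordinal

section Blocks

variable {lam : Cardinal.{0}}

def blockZ (β : Ordinal.{0}) : Set Ordinal.{0} := Ico (ω * β) (ω * β + ω)

def blockT (β : Ordinal.{0}) : LocalFilter :=
  ⟨ω * β, blockZ β, {A | A ⊆ blockZ β ∧ ∃ b < ω * β + ω, ∀ x ∈ blockZ β, b ≤ x → x ∈ A}⟩

theorem mem_blockZ_iff {x β : Ordinal.{0}} : x ∈ blockZ β ↔ x / ω = β := by
  constructor
  · rintro ⟨h₁, h₂⟩
    refine le_antisymm ?_ ((mul_le_iff_le_div omega0_ne_zero).1 h₁)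
    rw [← Order.lt_succ_iff, ← lt_mul_iff_div_lt omega0_ne_zero, mul_succ]
    exact h₂
  · rintro rfl
    exact ⟨mul_div_le x ω, lt_mul_div_add x omega0_ne_zero⟩

theorem self_mem_blockZ (β : Ordinal.{0}) : ω * β ∈ blockZ β :=
  ⟨le_rfl, lt_add_of_pos_right _ omega0_pos⟩

theorem sSup_blockZ (β : Ordinal.{0}) : sSup (blockZ β) = ω * β + ω := by
  refine csSup_eq_of_forall_le_of_forall_lt_exists_gt ⟨_, self_mem_blockZ β⟩
    (fun x hx => hx.2.le) fun u hu => ?_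
  have hlim : Order.IsSuccLimit (ω * β + ω) := isSuccLimit_add _ isSuccLimit_omega0
  rcases le_or_gt (ω * β) u with h | h
  · exact ⟨u + 1, ⟨h.trans le_self_add, hlim.succ_lt hu⟩, lt_add_one u⟩
  · exact ⟨ω * β, self_mem_blockZ β, h⟩

theorem mk_blockZ_le (β : Ordinal.{0}) : #(blockZ β) ≤ ℵ₀ := by
  have hinj : InjOn (· % ω) (blockZ β) := fun x hx y hy h => by
    rw [← div_add_mod x ω, ← div_add_mod y ω, mem_blockZ_iff.1 hx, mem_blockZ_iff.1 hy]
    exact congrArg _ h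
  calc #(blockZ β) = #((· % ω) '' blockZ β) := (Cardinal.mk_image_eq_of_injOn _ _ hinj).symm
    _ ≤ #(Iio ω) := Cardinal.mk_le_mk_of_subset <| image_subset_iff.2 fun x _ =>
        mod_lt x omega0_ne_zero
    _ = ℵ₀ := by rw [Cardinal.mk_Iio_ordinal, card_omega0, Cardinal.lift_aleph0]

theorem ord_pos (hunc : ℵ₀ < lam) : 0 < lam.ord :=
  omega0_pos.trans (omega0_lt_ord.2 hunc)

theorem natCast_lt_ord (hunc : ℵ₀ < lam) (n : ℕ) : (n : Ordinal.{0}) < lam.ord :=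
  (natCast_lt_omega0 n).trans (omega0_lt_ord.2 hunc)

theorem omega0_mul_add_lt_ord (hunc : ℵ₀ < lam) {β γ : Ordinal.{0}}
    (hβ : β < lam.ord) (hγ : γ < lam.ord) : ω * β + γ < lam.ord :=
  isPrincipal_add_ord hunc.le (isPrincipal_mul_ord hunc.le (omega0_lt_ord.2 hunc) hβ) hγ

theorem blockZ_subset_Iio (hunc : ℵ₀ < lam) {β : Ordinal.{0}} (hβ : β < lam.ord) :
    blockZ β ⊆ Iio lam.ord :=
  fun _ hx => hx.2.trans (omega0_mul_add_lt_ord hunc hβ (omega0_lt_ord.2 hunc))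

theorem blockT_mem_Fcobdd (hunc : ℵ₀ < lam) {β : Ordinal.{0}} (hβ : β < lam.ord) :
    blockT β ∈ Fcobdd lam := by
  refine ⟨self_mem_blockZ β, fun x hx => ⟨hx.1, blockZ_subset_Iio hunc hβ hx⟩, ?_, ?_, ?_⟩
  · exact (mk_blockZ_le β).trans_lt (by simpa using hunc)
  · show sSup (blockZ β) ∉ blockZ β
    rw [sSup_blockZ]
    exact fun h => h.2.false
  · show _ = {A | A ⊆ blockZ β ∧ ∃ b < sSup (blockZ β), _}
    rw [sSup_blockZ]
    rfl

theorem blockT_injective : Function.Injective blockT := fun _ _ h =>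
  mul_right_injective₀ omega0_ne_zero (congrArg LocalFilter.a h)

theorem blockT_Z_subset_Iio_of_a_lt {β₁ β₂ : Ordinal.{0}} (h : (blockT β₁).a < (blockT β₂).a) :
    (blockT β₁).Z ⊆ Iio (blockT β₂).a := by
  have hβ : β₁ < β₂ := (mul_lt_mul_iff_right₀ omega0_pos).1 h
  intro x hx
  calc x < ω * β₁ + ω := hx.2
    _ = ω * Order.succ β₁ := (mul_succ _ _).symm
    _ ≤ ω * β₂ := mul_le_mul_right (Order.succ_le_of_lt hβ) _

end Blocks

section Sequence

variable {lam : Cardinal.{0}}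

def pSeq (lam : Cardinal.{0}) (n : ℕ) : Set LocalFilter :=
  blockT '' {β | β < lam.ord ∧ (n : Ordinal) ≤ β % ω}

theorem StronglyDisjoint.mk_fiber_le_one {r : Set LocalFilter} (hr : StronglyDisjoint r)
    (ξ : Ordinal.{0}) : #{t | t ∈ r ∧ t.a = ξ} ≤ 1 :=
  Cardinal.mk_le_one_iff_set_subsingleton.2 fun s hs t ht =>
    hr.1 s hs.1 t ht.1 (hs.2.trans ht.2.symm)

theorem stronglyDisjoint_pSeq (lam : Cardinal.{0}) (n : ℕ) : StronglyDisjoint (pSeq lam n) := by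
  refine ⟨?_, ?_⟩
  · rintro _ ⟨β₁, -, rfl⟩ _ ⟨β₂, -, rfl⟩ h
    rw [mul_right_injective₀ omega0_ne_zero h]
  · rintro _ ⟨β₁, -, rfl⟩ _ ⟨β₂, -, rfl⟩ h
    exact blockT_Z_subset_Iio_of_a_lt h

theorem mk_pSeq (hunc : ℵ₀ < lam) (n : ℕ) : #(pSeq lam n) = Cardinal.lift.{1} lam := by
  set S := {β | β < lam.ord ∧ (n : Ordinal) ≤ β % ω}
  have hmk : #(Iio lam.ord) = Cardinal.lift.{1} lam := by
    rw [Cardinal.mk_Iio_ordinal, card_ord]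
  have hshift : (fun ξ => ω * ξ + n) '' Iio lam.ord ⊆ S := by
    rintro _ ⟨ξ, hξ, rfl⟩
    refine ⟨omega0_mul_add_lt_ord hunc hξ (natCast_lt_ord hunc n), ?_⟩
    rw [mul_add_mod_self, mod_eq_of_lt (natCast_lt_omega0 n)]
  have hinj : InjOn (fun ξ => ω * ξ + n) (Iio lam.ord) := fun ξ _ ξ' _ h => by
    simpa [mul_add_div _ omega0_ne_zero, div_eq_zero_of_lt (natCast_lt_omega0 n)] using
      congrArg (· / ω) h
  rw [pSeq, Cardinal.mk_image_eq blockT_injective]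
  refine le_antisymm (hmk ▸ Cardinal.mk_le_mk_of_subset fun β hβ => hβ.1) ?_
  rw [← hmk, ← Cardinal.mk_image_eq_of_injOn _ _ hinj]
  exact Cardinal.mk_le_mk_of_subset hshift

theorem pSeq_mem_Qzero (hunc : ℵ₀ < lam) (n : ℕ) : pSeq lam n ∈ Qzero lam (Fcobdd lam) := by
  refine ⟨⟨?_, mk_pSeq hunc n, fun ξ => ?_⟩, stronglyDisjoint_pSeq lam n⟩
  · rintro _ ⟨β, ⟨hβ, -⟩, rfl⟩
    exact blockT_mem_Fcobdd hunc hβ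
  · exact ((stronglyDisjoint_pSeq lam n).mk_fiber_le_one ξ).trans_lt
      (Cardinal.one_lt_aleph0.trans (by simpa using hunc))

theorem pSeq_succ_subset (lam : Cardinal.{0}) (n : ℕ) : pSeq lam (n + 1) ⊆ pSeq lam n :=
  image_mono fun _ hβ => ⟨hβ.1, le_trans (by simp) hβ.2⟩

theorem fil_anti {r r' : Set LocalFilter} (h : r' ⊆ r) : fil lam r ⊆ fil lam r' :=
  fun _ ⟨hA, ε, hε, hr⟩ => ⟨hA, ε, hε, fun t ht => hr t (h ht)⟩

def columnSet (lam : Cardinal.{0}) (n : ℕ) : Set Ordinal.{0} :=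
  {x | x < lam.ord ∧ (n : Ordinal) ≤ (x / ω) % ω}

def blockTails (lam : Cardinal.{0}) (h : Ordinal.{0} → Ordinal.{0}) : Set Ordinal.{0} :=
  {x | x < lam.ord ∧ h (x / ω) ≤ x % ω}

theorem columnSet_mem_fil_pSeq (hunc : ℵ₀ < lam) (n : ℕ) :
    columnSet lam n ∈ fil lam (pSeq lam n) := by
  refine ⟨fun x hx => hx.1, 0, ord_pos hunc, ?_⟩
  rintro _ ⟨β, ⟨hβ, hn⟩, rfl⟩ -
  refine ⟨inter_subset_right, ω * β, (self_mem_blockZ β).2, fun x hx _ => ⟨⟨?_, ?_⟩, hx⟩⟩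
  · exact blockZ_subset_Iio hunc hβ hx
  · rwa [mem_blockZ_iff.1 hx]

theorem blockTails_mem_fil_pSeq (hunc : ℵ₀ < lam) {h : Ordinal.{0} → Ordinal.{0}}
    (hh : ∀ β, h β < ω) (n : ℕ) : blockTails lam h ∈ fil lam (pSeq lam n) := by
  refine ⟨fun x hx => hx.1, 0, ord_pos hunc, ?_⟩
  rintro _ ⟨β, ⟨hβ, -⟩, rfl⟩ -
  refine ⟨inter_subset_right, ω * β + h β, add_lt_add_right (hh β) _,
    fun x hx hle => ⟨⟨blockZ_subset_Iio hunc hβ hx, ?_⟩, hx⟩⟩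
  have hxβ := mem_blockZ_iff.1 hx
  rw [← div_add_mod x ω, hxβ] at hle
  rw [hxβ]
  exact (add_le_add_iff_left _).1 hle

end Sequence

section Bounds

variable {lam : Cardinal.{0}}

theorem sSup_lt_ord_of_mk_lt (hreg : lam.IsRegular) {S : Set Ordinal.{0}}
    (hS : ∀ x ∈ S, x < lam.ord) (hmk : #S < Cardinal.lift.{1} lam) : sSup S < lam.ord :=
  sSup_lt_of_lt_cof (by rwa [← lift_cof, hreg.cof_ord]) hS

theorem mk_setOf_a_lt (hreg : lam.IsRegular) {r : Set LocalFilter}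
    (hfib : ∀ ξ : Ordinal.{0}, #{t | t ∈ r ∧ t.a = ξ} < Cardinal.lift.{1} lam)
    {ε : Ordinal.{0}} (hε : ε < lam.ord) : #{t | t ∈ r ∧ t.a < ε} < Cardinal.lift.{1} lam := by
  have hsub : {t | t ∈ r ∧ t.a < ε} ⊆ ⋃ ξ : Iio ε, {t | t ∈ r ∧ t.a = ξ} :=
    fun t ht => mem_iUnion.2 ⟨⟨t.a, ht.2⟩, ht.1, rfl⟩
  calc #{t | t ∈ r ∧ t.a < ε} ≤ #(⋃ ξ : Iio ε, {t | t ∈ r ∧ t.a = ξ}) :=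
        Cardinal.mk_le_mk_of_subset hsub
    _ ≤ Cardinal.sum fun ξ : Iio ε => #{t | t ∈ r ∧ t.a = ξ} := Cardinal.mk_iUnion_le_sum_mk
    _ < Cardinal.lift.{1} lam := by
        refine Cardinal.sum_lt_of_isRegular hreg.lift ?_ fun ξ => hfib ξ
        rw [Cardinal.mk_Iio_ordinal]
        exact Cardinal.lift_lt.2 (Cardinal.lt_ord.1 hε)

theorem exists_le_a_of_mem_Qstar (hreg : lam.IsRegular) {S q : Set LocalFilter}
    (hq : q ∈ Qstar lam S) {ε : Ordinal.{0}} (hε : ε < lam.ord) : ∃ t ∈ q, ε ≤ t.a := by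
  by_contra! h
  have hq' : q = {t | t ∈ q ∧ t.a < ε} := (sep_eq_self_iff_mem_true.2 h).symm
  exact (mk_setOf_a_lt hreg hq.2.2 hε).ne (hq' ▸ hq.2.1)

theorem sSup_Z_lt_ord (hreg : lam.IsRegular) {t : LocalFilter} (ht : t ∈ Fcobdd lam) :
    sSup t.Z < lam.ord :=
  sSup_lt_ord_of_mk_lt hreg (fun _ hx => (ht.2.1 hx).2) ht.2.2.1

theorem bddAbove_Z {t : LocalFilter} (ht : t ∈ Fcobdd lam) : BddAbove t.Z :=
  ⟨lam.ord, fun _ hx => (ht.2.1 hx).2.le⟩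

theorem exists_forall_mem_of_forall_mem_fil (hreg : lam.IsRegular) (hunc : ℵ₀ < lam)
    {r : Set LocalFilter} {A : ℕ → Set Ordinal.{0}} (hA : ∀ n, A n ∈ fil lam r) :
    ∃ ε < lam.ord, ∀ t ∈ r, ε ≤ t.a → ∀ n, A n ∩ t.Z ∈ t.F := by
  choose _ ε hε hr using hA
  refine ⟨⨆ n, ε n, iSup_lt_of_lt_cof (by rwa [Cardinal.mk_nat, hreg.cof_ord]) hε,
    fun t ht hle n => hr n t ht ((le_ciSup Ordinal.bddAbove_of_small n).trans hle)⟩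

end Bounds

section Diagonal

variable {lam : Cardinal.{0}}

theorem exists_mem_le_omega0_mul_div {Z : Set Ordinal.{0}}
    (hZ : ∀ n : ℕ, ∃ β₀ < sSup Z, ∀ x ∈ Z, β₀ ≤ x → (n : Ordinal) ≤ (x / ω) % ω)
    {β : Ordinal.{0}} (hβ : β < sSup Z) : ∃ x ∈ Z, β ≤ ω * (x / ω) := by
  obtain ⟨n, hn⟩ := lt_omega0.1 (mod_lt (β / ω) omega0_ne_zero)
  obtain ⟨β₀, hβ₀, htail⟩ := hZ (n + 1)
  obtain ⟨x, hx, hlt⟩ := exists_lt_of_lt_csSup' (max_lt hβ hβ₀)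
  have hres := htail x hx ((le_max_right _ _).trans hlt.le)
  have hne : β / ω ≠ x / ω := fun h => by
    rw [← h, hn] at hres
    exact absurd (Nat.cast_le.1 hres) (Nat.not_succ_le_self n)
  have hdiv : β / ω < x / ω := (div_le_left ((le_max_left _ _).trans hlt.le) ω).lt_of_ne hne
  refine ⟨x, hx, le_of_lt ?_⟩
  calc β < ω * (β / ω) + ω := lt_mul_div_add β omega0_ne_zero
    _ = ω * Order.succ (β / ω) := (mul_succ _ _).symm
    _ ≤ ω * (x / ω) := mul_le_mul_right (Order.succ_le_of_lt hdiv) _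

def blockIndices (t : LocalFilter) : Set Ordinal.{0} := (· / ω) '' t.Z

theorem div_omega0_lt_of_add_omega0_le {y δ y' : Ordinal.{0}} (hy : y ≤ δ) (hy' : δ + ω ≤ y') :
    y / ω < y' / ω := by
  rw [← Order.succ_le_iff, ← mul_le_iff_le_div omega0_ne_zero, mul_succ]
  exact (add_le_add_left ((mul_div_le y ω).trans hy) ω).trans hy'

/-- A maximal subfamily with pairwise disjoint block supports is cofinal: a bounded subfamily
has fewer than `lam` members, all supported below some `δ < lam`, and a member of `q`
starting beyond `δ + ω` could be added to it. -/
theorem exists_cofinal_pairwiseDisjoint_blockIndices (hreg : lam.IsRegular) (hunc : ℵ₀ < lam)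
    {q : Set LocalFilter} (hq : q ∈ Qstar lam (Fcobdd lam)) :
    ∃ T ⊆ q, T.PairwiseDisjoint blockIndices ∧ ∀ ε < lam.ord, ∃ t ∈ T, ε ≤ t.a := by
  obtain ⟨T, hmax⟩ := zorn_subset {T | T ⊆ q ∧ T.PairwiseDisjoint blockIndices}
    fun c hc hchain => ⟨⋃₀ c, ⟨sUnion_subset fun T hT => (hc hT).1,
      (pairwiseDisjoint_sUnion hchain.directedOn).2 fun T hT => (hc hT).2⟩,
      fun T hT => subset_sUnion_of_mem hT⟩
  obtain ⟨hTq, hT⟩ := hmax.prop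
  refine ⟨T, hTq, hT, fun ε hε => ?_⟩
  by_contra! hlt
  have hFc : ∀ s ∈ T, s ∈ Fcobdd lam := fun s hs => hq.1 (hTq hs)
  set δ := sSup ((fun s => sSup s.Z) '' T)
  have hbdd : BddAbove ((fun s => sSup s.Z) '' T) :=
    ⟨lam.ord, forall_mem_image.2 fun s hs => (sSup_Z_lt_ord hreg (hFc s hs)).le⟩
  have hmk : #T < Cardinal.lift.{1} lam :=
    (Cardinal.mk_le_mk_of_subset (show T ⊆ {t | t ∈ q ∧ t.a < ε} from
      fun s hs => ⟨hTq hs, hlt s hs⟩)).trans_lt (mk_setOf_a_lt hreg hq.2.2 hε)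
  have hδ : δ < lam.ord := sSup_lt_ord_of_mk_lt hreg
    (forall_mem_image.2 fun s hs => sSup_Z_lt_ord hreg (hFc s hs))
    (Cardinal.mk_image_le.trans_lt hmk)
  obtain ⟨t, htq, hta⟩ := exists_le_a_of_mem_Qstar hreg hq
    (max_lt hε (show δ + ω < lam.ord from isPrincipal_add_ord hunc.le hδ (omega0_lt_ord.2 hunc)))
  have hdisj : ∀ s ∈ T, Disjoint (blockIndices t) (blockIndices s) := by
    refine fun s hs => disjoint_left.2 ?_
    rintro _ ⟨y', hy', rfl⟩ ⟨y, hy, heq⟩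
    have hyδ : y ≤ δ := (le_csSup (bddAbove_Z (hFc s hs)) hy).trans (le_csSup hbdd ⟨s, hs, rfl⟩)
    have hy'δ : δ + ω ≤ y' := ((le_max_right _ _).trans hta).trans ((hq.1 htq).2.1 hy').1
    exact (div_omega0_lt_of_add_omega0_le hyδ hy'δ).ne heq
  have hins := hmax.eq_of_subset ⟨insert_subset htq hTq, hT.insert fun s hs _ => hdisj s hs⟩
    (subset_insert t T)
  exact (hlt t (hins ▸ mem_insert t T)).not_ge ((le_max_left _ _).trans hta)

/-- The junk value `0` is taken on blocks not met by `T`. -/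
def leastInBlock (T : Set LocalFilter) (b : Ordinal.{0}) : Ordinal.{0} :=
  sInf {y | (∃ s ∈ T, y ∈ s.Z) ∧ y / ω = b}

theorem blockTails_inter_Z_notMem_F {T : Set LocalFilter} (hT : T.PairwiseDisjoint blockIndices)
    {t : LocalFilter} (htT : t ∈ T) (ht : t ∈ Fcobdd lam)
    (hcol : ∀ n, columnSet lam n ∩ t.Z ∈ t.F) :
    blockTails lam (fun b => Order.succ (leastInBlock T b % ω)) ∩ t.Z ∉ t.F := by
  have hZ : ∀ n : ℕ, ∃ β₀ < sSup t.Z, ∀ x ∈ t.Z, β₀ ≤ x → (n : Ordinal) ≤ (x / ω) % ω := by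
    intro n
    obtain ⟨-, β₀, hβ₀, h⟩ := ht.2.2.2.2 ▸ hcol n
    exact ⟨β₀, hβ₀, fun x hx hle => (h x hx hle).1.2⟩
  rw [ht.2.2.2.2]
  rintro ⟨-, β, hβ, htail⟩
  obtain ⟨x, hx, hβx⟩ := exists_mem_le_omega0_mul_div hZ hβ
  obtain ⟨⟨s, hsT, hws⟩, hwx⟩ :
      leastInBlock T (x / ω) ∈ {y | (∃ s ∈ T, y ∈ s.Z) ∧ y / ω = x / ω} :=
    csInf_mem ⟨x, ⟨t, htT, hx⟩, rfl⟩
  set w := leastInBlock T (x / ω)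
  -- `w` lies in the block of `x`, so by disjointness it is a point of `t.Z` itself
  obtain rfl : s = t := hT.elim hsT htT (not_disjoint_iff.2 ⟨x / ω, ⟨w, hws, hwx⟩, x, hx, rfl⟩)
  have hw := (htail w hws (hβx.trans (hwx ▸ mul_div_le w ω))).1.2
  rw [hwx] at hw
  exact (Order.lt_succ (w % ω)).not_ge hw

theorem not_forall_fil_pSeq_subset (hreg : lam.IsRegular) (hunc : ℵ₀ < lam)
    {q : Set LocalFilter} (hq : q ∈ Qstar lam (Fcobdd lam)) :
    ¬ ∀ n, fil lam (pSeq lam n) ⊆ fil lam q := by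
  intro hle
  obtain ⟨ε, hε, hcol⟩ := exists_forall_mem_of_forall_mem_fil hreg hunc
    fun n => hle n (columnSet_mem_fil_pSeq hunc n)
  obtain ⟨T, hTq, hT, hcof⟩ := exists_cofinal_pairwiseDisjoint_blockIndices hreg hunc hq
  obtain ⟨-, ε', hε', htails⟩ := hle 0 <| blockTails_mem_fil_pSeq hunc
    (fun b => isSuccLimit_omega0.succ_lt (mod_lt (leastInBlock T b) omega0_ne_zero)) 0
  obtain ⟨t, htT, hta⟩ := hcof _ (max_lt hε hε')
  exact blockTails_inter_Z_notMem_F hT htT (hq.1 (hTq htT))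
    (hcol t (hTq htT) ((le_max_left _ _).trans hta))
    (htails t (hTq htT) ((le_max_right _ _).trans hta))

end Diagonal

/-- In the full system of co-bounded filters there is a `≤*`-increasing `ω`-sequence
in `Q⁰` with no `≤*`-upper bound in `Q*`. -/
theorem stmt4 (lam : Cardinal.{0}) (hreg : lam.IsRegular) (hunc : ℵ₀ < lam) :
    ∃ p : ℕ → Set LocalFilter,
      (∀ n, p n ∈ Qzero lam (Fcobdd lam)) ∧
      (∀ n, fil lam (p n) ⊆ fil lam (p (n + 1))) ∧
      ¬ ∃ q ∈ Qstar lam (Fcobdd lam), ∀ n, fil lam (p n) ⊆ fil lam q :=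
  ⟨pSeq lam, pSeq_mem_Qzero hunc, fun n => fil_anti (pSeq_succ_subset lam n),
    fun ⟨_, hq, hle⟩ => not_forall_fil_pSeq_subset hreg hunc hq hle⟩

end

end RS889
end

section
/- If λ is a measurable cardinal, then there exist a system 𝓕 of local filters on λ and a family H ⊆ Q⁰_λ(𝓕) which is (<λ⁺)-directed with respect to ≤* (i.e., every subfamily of H of cardinality ≤ λ has a ≤*-upper bound in H) such that fil(H) is an ultrafilter on λ containing all club subsets of λ (and hence fil(H) is not weakly reasonable). -/
namespace RS889

noncomputable section

open Cardinal Set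

universe u v

/-!
A normal measure `W` on `lam` is obtained by pushing the `lam`-complete ultrafilter forward along a
function that is minimal, mod the ultrafilter, among those constant on no set of it. All local
filters are taken principal, `(α, {α}, {{α}})`; for `C ∈ W` the family `r_C` of the principal
triples at points of `C` lies in `Q⁰`, and `fil(r_C)` consists of the sets containing a tail of
`C`, so `fil(H) = W` for `H = {r_C : C ∈ W}`. Directedness of `H` is closure of `W` under diagonal
intersections, clubs lie in `W` by Fodor's lemma, and `W` is not weakly reasonable because
`⋃_{δ ∈ C} [δ, δ + δ) ⊇ C \ {0}`.
-/

namespace IsFilterOn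

variable {α : Type u} {F : Set (Set α)} {Z A B : Set α}

lemma subset (h : IsFilterOn F Z) (hA : A ∈ F) : A ⊆ Z := h.1 A hA

lemma self_mem (h : IsFilterOn F Z) : Z ∈ F := h.2.1

lemma mono (h : IsFilterOn F Z) (hA : A ∈ F) (hAB : A ⊆ B) (hB : B ⊆ Z) : B ∈ F :=
  h.2.2.1 A hA B hAB hB

lemma inter_mem (h : IsFilterOn F Z) (hA : A ∈ F) (hB : B ∈ F) : A ∩ B ∈ F :=
  h.2.2.2.1 A hA B hB

lemma nonempty (h : IsFilterOn F Z) (hA : A ∈ F) : A.Nonempty :=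
  Set.nonempty_iff_ne_empty.mpr fun h0 => h.2.2.2.2 (h0 ▸ hA)

end IsFilterOn

lemma IsUltraOn.diff_mem_of_notMem {α : Type u} {F : Set (Set α)} {Z A : Set α}
    (h : IsUltraOn F Z) (hA : A ⊆ Z) (hAF : A ∉ F) : Z \ A ∈ F :=
  (h.2 A hA).resolve_left hAF

lemma isFilterOn_singleton {α : Type u} (a : α) : IsFilterOn {{a}} {a} := by
  refine ⟨fun A hA => hA.le, rfl, ?_, ?_, ?_⟩
  · rintro A rfl B hAB hB
    exact hB.antisymm hAB
  · rintro A rfl B rfl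
    exact Set.inter_self _
  · exact fun h => Set.singleton_ne_empty a (Set.mem_singleton_iff.mp h).symm

structure IsCompleteUltraOn (lam : Cardinal.{0}) (U : Set (Set Ordinal.{0})) : Prop where
  isUltraOn : IsUltraOn U (Iio lam.ord)
  singleton_notMem : ∀ x : Ordinal.{0}, ({x} : Set Ordinal.{0}) ∉ U
  inter_sInter_mem : ∀ S ⊆ U, #S < Cardinal.lift.{1} lam → Iio lam.ord ∩ ⋂₀ S ∈ U

namespace IsCompleteUltraOn

variable {lam : Cardinal.{0}} {U : Set (Set Ordinal.{0})}

lemma isFilterOn (hU : IsCompleteUltraOn lam U) : IsFilterOn U (Iio lam.ord) := hU.isUltraOn.1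

lemma Iio_diff_singleton_mem (hU : IsCompleteUltraOn lam U) (x : Ordinal.{0}) :
    Iio lam.ord \ {x} ∈ U := by
  by_cases hx : x < lam.ord
  · exact hU.isUltraOn.diff_mem_of_notMem (by simpa using hx) (hU.singleton_notMem x)
  · rw [Set.sdiff_singleton_eq_self (s := Iio lam.ord) hx]
    exact hU.isFilterOn.self_mem

lemma diff_mem_of_mk_lt (hU : IsCompleteUltraOn lam U) {A B : Set Ordinal.{0}} (hA : A ∈ U)
    (hB : #B < Cardinal.lift.{1} lam) : A \ B ∈ U := by
  have hS : (fun x => Iio lam.ord \ {x}) '' B ⊆ U := by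
    rintro _ ⟨x, -, rfl⟩
    exact hU.Iio_diff_singleton_mem x
  refine hU.isFilterOn.mono
    (hU.isFilterOn.inter_mem hA (hU.inter_sInter_mem _ hS (Cardinal.mk_image_le.trans_lt hB)))
    ?_ (sdiff_subset.trans (hU.isFilterOn.subset hA))
  rintro ξ ⟨hξA, -, hξS⟩
  exact ⟨hξA, fun hξB => (hξS _ ⟨ξ, hξB, rfl⟩).2 rfl⟩

lemma diff_Iio_mem (hU : IsCompleteUltraOn lam U) {A : Set Ordinal.{0}} (hA : A ∈ U)
    {ε : Ordinal.{0}} (hε : ε < lam.ord) : A \ Iio ε ∈ U :=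
  hU.diff_mem_of_mk_lt hA (by simpa using Cardinal.lift_lt.mpr (Cardinal.lt_ord.mp hε))

lemma mk_eq (hU : IsCompleteUltraOn lam U) {A : Set Ordinal.{0}} (hA : A ∈ U) :
    #A = Cardinal.lift.{1} lam := by
  refine le_antisymm ?_ (not_lt.mp fun hlt => ?_)
  · simpa using Cardinal.mk_le_mk_of_subset (hU.isFilterOn.subset hA)
  · simpa using hU.isFilterOn.nonempty (hU.diff_mem_of_mk_lt hA hlt)

lemma iInter_mem (hU : IsCompleteUltraOn lam U) (hunc : ℵ₀ < lam) {A : ℕ → Set Ordinal.{0}}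
    (hA : ∀ n, A n ∈ U) : Iio lam.ord ∩ ⋂ n, A n ∈ U := by
  rw [← Set.sInter_range]
  refine hU.inter_sInter_mem _ (Set.range_subset_iff.mpr hA) ?_
  exact (Set.countable_range A).le_aleph0.trans_lt (by simpa using hunc)

lemma not_forall_lt_succ (hU : IsCompleteUltraOn lam U) (hunc : ℵ₀ < lam)
    (f : ℕ → Ordinal.{0} → Ordinal.{0}) :
    ¬ ∀ n, Iio lam.ord ∩ {ξ | f (n + 1) ξ < f n ξ} ∈ U := fun h => by
  obtain ⟨ξ, -, hξ⟩ := hU.isFilterOn.nonempty (hU.iInter_mem hunc h)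
  obtain ⟨n, hn⟩ := WellFounded.not_rel_apply_succ (r := (· < ·)) (fun n => f n ξ)
  exact hn (Set.mem_iInter.mp hξ n).2

end IsCompleteUltraOn

def IsNonconstantMod (lam : Cardinal.{0}) (U : Set (Set Ordinal.{0}))
    (f : Ordinal.{0} → Ordinal.{0}) : Prop :=
  ∀ γ, Iio lam.ord ∩ f ⁻¹' {γ} ∉ U

def pushforward (lam : Cardinal.{0}) (f : Ordinal.{0} → Ordinal.{0})
    (U : Set (Set Ordinal.{0})) : Set (Set Ordinal.{0}) :=
  {A | A ⊆ Iio lam.ord ∧ Iio lam.ord ∩ f ⁻¹' A ∈ U}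

section Pushforward

variable {lam : Cardinal.{0}} {U : Set (Set Ordinal.{0})} {f : Ordinal.{0} → Ordinal.{0}}

lemma IsCompleteUltraOn.pushforward (hU : IsCompleteUltraOn lam U)
    (hf : Iio lam.ord ∩ f ⁻¹' Iio lam.ord ∈ U) (hnc : IsNonconstantMod lam U f) :
    IsCompleteUltraOn lam (pushforward lam f U) := by
  have hFU := hU.isFilterOn
  have hpre : ∀ A, Iio lam.ord ∩ f ⁻¹' A ⊆ Iio lam.ord := fun A => inter_subset_left
  refine ⟨⟨⟨fun A hA => hA.1, ⟨subset_rfl, hf⟩, ?_, ?_, ?_⟩, ?_⟩, fun x hx => hnc x hx.2, ?_⟩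
  · rintro A ⟨-, hA⟩ B hAB hB
    exact ⟨hB, hFU.mono hA (inter_subset_inter_right _ (preimage_mono hAB)) (hpre B)⟩
  · rintro A ⟨hAsub, hA⟩ B ⟨-, hB⟩
    refine ⟨inter_subset_left.trans hAsub, ?_⟩
    rw [preimage_inter, inter_inter_distrib_left]
    exact hFU.inter_mem hA hB
  · rintro ⟨-, h⟩
    simpa using hFU.nonempty h
  · intro A hA
    refine (hU.isUltraOn.2 _ (hpre A)).imp (fun h => ⟨hA, h⟩) fun h => ⟨sdiff_subset, ?_⟩
    refine hFU.mono (hFU.inter_mem h hf) ?_ (hpre _)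
    rintro ξ ⟨⟨hξ, hξA⟩, -, hfξ⟩
    exact ⟨hξ, hfξ, fun h => hξA ⟨hξ, h⟩⟩
  · intro S hS hSc
    have hT : (fun A => Iio lam.ord ∩ f ⁻¹' A) '' S ⊆ U := by
      rintro _ ⟨A, hA, rfl⟩
      exact (hS hA).2
    refine ⟨inter_subset_left, hFU.mono
      (hFU.inter_mem (hU.inter_sInter_mem _ hT (Cardinal.mk_image_le.trans_lt hSc)) hf) ?_ (hpre _)⟩
    rintro ξ ⟨⟨hξ, hξT⟩, -, hfξ⟩
    exact ⟨hξ, hfξ, fun A hA => (hξT _ ⟨A, hA, rfl⟩).2⟩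

lemma IsCompleteUltraOn.isNonconstantMod_id (hU : IsCompleteUltraOn lam U) :
    IsNonconstantMod lam U id := by
  intro γ h
  rcases subset_singleton_iff_eq.mp (inter_subset_right : Iio lam.ord ∩ id ⁻¹' {γ} ⊆ {γ})
    with h0 | h0 <;> rw [h0] at h
  · exact (hU.isFilterOn.nonempty h).ne_empty rfl
  · exact hU.singleton_notMem γ h

lemma IsCompleteUltraOn.exists_minimal_nonconstant (hU : IsCompleteUltraOn lam U)
    (hunc : ℵ₀ < lam) :
    ∃ f, IsNonconstantMod lam U f ∧
      ∀ g, IsNonconstantMod lam U g → Iio lam.ord ∩ {ξ | g ξ < f ξ} ∉ U := by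
  by_contra! h
  choose! g hgnc hglt using h
  have hnc : ∀ n, IsNonconstantMod lam U (g^[n] id) := by
    intro n
    induction n with
    | zero => exact hU.isNonconstantMod_id
    | succ n ih => exact Function.iterate_succ_apply' g n id ▸ hgnc _ ih
  refine hU.not_forall_lt_succ hunc (fun n => g^[n] id) fun n => ?_
  simpa only [Function.iterate_succ_apply'] using hglt _ (hnc n)

/-- Since `id` is constant on no set of `U`, a minimal such `f` satisfies `f ≤ id` mod `U`. -/
lemma IsCompleteUltraOn.preimage_Iio_mem_of_minimal (hU : IsCompleteUltraOn lam U)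
    (hmin : ∀ g, IsNonconstantMod lam U g → Iio lam.ord ∩ {ξ | g ξ < f ξ} ∉ U) :
    Iio lam.ord ∩ f ⁻¹' Iio lam.ord ∈ U := by
  refine hU.isFilterOn.mono (hU.isUltraOn.diff_mem_of_notMem inter_subset_left
    (hmin id hU.isNonconstantMod_id)) ?_ inter_subset_left
  rintro ξ ⟨hξ, hξf⟩
  exact ⟨hξ, show f ξ < lam.ord from (not_lt.mp fun h => hξf ⟨hξ, h⟩).trans_lt hξ⟩

end Pushforward

structure IsNormalUltraOn (lam : Cardinal.{0}) (W : Set (Set Ordinal.{0})) : Prop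
    extends IsCompleteUltraOn lam W where
  exists_const_of_regressive : ∀ B ∈ W, ∀ g : Ordinal.{0} → Ordinal.{0}, (∀ ξ ∈ B, g ξ < ξ) →
    ∃ γ, Iio lam.ord ∩ g ⁻¹' {γ} ∈ W

/-- If `g` is regressive on a set of the pushforward along the minimal `f`, then `g ∘ f < f` mod
`U`, so `g ∘ f` is constant mod `U`. -/
lemma IsCompleteUltraOn.exists_isNormalUltraOn {lam : Cardinal.{0}} {U : Set (Set Ordinal.{0})}
    (hU : IsCompleteUltraOn lam U) (hunc : ℵ₀ < lam) : ∃ W, IsNormalUltraOn lam W := by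
  obtain ⟨f, hnc, hmin⟩ := hU.exists_minimal_nonconstant hunc
  have hf := hU.preimage_Iio_mem_of_minimal hmin
  refine ⟨_, hU.pushforward hf hnc, ?_⟩
  rintro B ⟨-, hB⟩ g hg
  obtain ⟨γ, hγ⟩ : ∃ γ, Iio lam.ord ∩ (g ∘ f) ⁻¹' {γ} ∈ U := by
    by_contra! h
    refine hmin (g ∘ f) h (hU.isFilterOn.mono hB ?_ inter_subset_left)
    exact fun ξ hξ => ⟨hξ.1, hg _ hξ.2⟩
  refine ⟨γ, inter_subset_left, hU.isFilterOn.mono (hU.isFilterOn.inter_mem hγ hf) ?_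
    inter_subset_left⟩
  rintro ξ ⟨⟨hξ, hgξ⟩, -, hfξ⟩
  exact ⟨hξ, hfξ, hgξ⟩

lemma IsClub.sSup_inter_Iio_lt {lam : Cardinal.{0}} {C : Set Ordinal.{0}} {ξ : Ordinal.{0}}
    (hC : IsClub lam C) (hξ : ξ < lam.ord) (hξC : ξ ∉ C) (hne : (C ∩ Iio ξ).Nonempty) :
    sSup (C ∩ Iio ξ) < ξ := by
  refine (csSup_le hne fun x hx => hx.2.le).lt_of_ne fun heq => hξC (hC.2.2 ξ hξ ?_ ?_)
  · obtain ⟨x, -, hx⟩ := hne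
    exact (zero_le.trans_lt hx).ne'
  · intro β hβ
    obtain ⟨x, ⟨hxC, hxξ⟩, hβx⟩ := exists_lt_of_lt_csSup hne (heq ▸ hβ)
    exact ⟨x, hxC, hβx, hxξ⟩

namespace IsNormalUltraOn

variable {lam : Cardinal.{0}} {W : Set (Set Ordinal.{0})}

lemma diag_mem (hW : IsNormalUltraOn lam W) {A : Ordinal.{0} → Set Ordinal.{0}}
    (hA : ∀ α, A α ∈ W) : {ξ | ξ < lam.ord ∧ ∀ α < ξ, ξ ∈ A α} ∈ W := by
  have hF := hW.isFilterOn
  by_contra hD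
  have hDc := hW.isUltraOn.diff_mem_of_notMem (fun ξ h => h.1) hD
  have hex : ∀ ξ ∈ Iio lam.ord \ {ξ | ξ < lam.ord ∧ ∀ α < ξ, ξ ∈ A α}, ∃ α < ξ, ξ ∉ A α := by
    rintro ξ ⟨hξ, hξD⟩
    by_contra! h
    exact hξD ⟨hξ, h⟩
  choose! g hglt hgA using hex
  obtain ⟨γ, hγ⟩ := hW.exists_const_of_regressive _ hDc g hglt
  obtain ⟨ξ, ⟨hξD, -, hξγ⟩, hξA⟩ := hF.nonempty (hF.inter_mem (hF.inter_mem hDc hγ) (hA γ))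
  exact hgA ξ hξD ((show g ξ = γ from hξγ) ▸ hξA)

lemma club_mem (hW : IsNormalUltraOn lam W) (hunc : ℵ₀ < lam) {C : Set Ordinal.{0}}
    (hC : IsClub lam C) : C ∈ W := by
  have hF := hW.isFilterOn
  by_contra hCW
  obtain ⟨c₀, hc₀C, -⟩ := hC.2.1 0 (Cardinal.ord_pos.mpr (aleph0_pos.trans hunc))
  set B := (Iio lam.ord \ C) \ Iio c₀
  have hB : B ∈ W := hW.diff_Iio_mem (hW.isUltraOn.diff_mem_of_notMem hC.1 hCW) (hC.1 hc₀C)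
  have hlt_of_mem : ∀ {c ξ}, c ∈ C → ξ ∈ B → c ≤ ξ → c < ξ := fun hc hξ hcξ =>
    hcξ.lt_of_ne fun h => hξ.1.2 (h ▸ hc)
  have hreg : ∀ ξ ∈ B, sSup (C ∩ Iio ξ) < ξ := fun ξ hξ =>
    hC.sSup_inter_Iio_lt hξ.1.1 hξ.1.2 ⟨c₀, hc₀C, hlt_of_mem hc₀C hξ (not_lt.mp hξ.2)⟩
  obtain ⟨γ, hγ⟩ := hW.exists_const_of_regressive B hB _ hreg
  obtain ⟨ξ, ⟨-, hξγ : sSup (C ∩ Iio ξ) = γ⟩, hξB⟩ := hF.nonempty (hF.inter_mem hγ hB)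
  obtain ⟨c, hcC, hγc⟩ := hC.2.1 γ ((hξγ ▸ hreg ξ hξB).trans hξB.1.1)
  obtain ⟨ξ', ⟨-, hξ'γ : sSup (C ∩ Iio ξ') = γ⟩, hξ'B, hcξ'⟩ :=
    hF.nonempty (hF.inter_mem hγ (hW.diff_Iio_mem hB (hC.1 hcC)))
  have hcle : c ≤ sSup (C ∩ Iio ξ') :=
    le_csSup ⟨ξ', fun x hx => hx.2.le⟩ ⟨hcC, hlt_of_mem hcC hξ'B (not_lt.mp hcξ')⟩
  exact hγc.not_ge (hξ'γ ▸ hcle)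

end IsNormalUltraOn

lemma IsClub.diff_zero {lam : Cardinal.{0}} {C : Set Ordinal.{0}} (hC : IsClub lam C) :
    IsClub lam (C \ {0}) := by
  refine ⟨sdiff_subset.trans hC.1, fun β hβ => ?_, fun δ hδ hδ0 hcl => ⟨?_, hδ0⟩⟩
  · obtain ⟨γ, hγC, hβγ⟩ := hC.2.1 β hβ
    exact ⟨γ, ⟨hγC, (zero_le.trans_lt hβγ).ne'⟩, hβγ⟩
  · refine hC.2.2 δ hδ hδ0 fun β hβ => ?_
    obtain ⟨γ, hγ, hγβ⟩ := hcl β hβ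
    exact ⟨γ, hγ.1, hγβ⟩

/-- With `f = id`, the union of the intervals `[δ, δ + δ)` over a club `C` contains `C \ {0}`. -/
lemma not_weaklyReasonable_of_club_mem {lam : Cardinal.{0}} {D : Set (Set Ordinal.{0})}
    (hunc : ℵ₀ < lam) (hD : IsFilterOn D (Iio lam.ord)) (hclub : ∀ C, IsClub lam C → C ∈ D) :
    ¬ WeaklyReasonable lam D := by
  intro hWR
  obtain ⟨C, hC, hnot⟩ := hWR id (fun _ h => h) (fun _ _ h _ => h) fun β hβ => ⟨β, hβ, le_rfl⟩
  refine hnot (hD.mono (hclub _ hC.diff_zero) ?_ ?_)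
  · rintro δ ⟨hδC, hδ0⟩
    refine mem_biUnion hδC ⟨le_rfl, ?_⟩
    simpa using pos_iff_ne_zero.mpr hδ0
  · simp only [iUnion_subset_iff]
    intro δ hδC x hx
    exact hx.2.trans (Ordinal.isPrincipal_add_ord hunc.le (hC.1 hδC) (hC.1 hδC))

def principalAt (α : Ordinal.{0}) : LocalFilter := ⟨α, {α}, {{α}}⟩

lemma principalAt_injective : Function.Injective principalAt :=
  fun _ _ h => congrArg LocalFilter.a h

def principals (C : Set Ordinal.{0}) : Set LocalFilter := principalAt '' C

section Principals

variable {lam : Cardinal.{0}}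

lemma isLFS_principals (hunc : ℵ₀ < lam) : IsLFS lam (principals (Iio lam.ord)) := by
  refine ⟨?_, fun β hβ => ⟨principalAt β, ⟨β, hβ, rfl⟩, le_rfl⟩⟩
  rintro _ ⟨α, hα, rfl⟩
  exact ⟨singleton_subset_iff.mpr hα, by simpa [principalAt] using one_lt_aleph0.trans hunc,
    isLeast_singleton, isFilterOn_singleton α⟩

lemma mem_fil_principals {C A : Set Ordinal.{0}} :
    A ∈ fil lam (principals C) ↔ A ⊆ Iio lam.ord ∧ ∃ ε < lam.ord, C \ Iio ε ⊆ A := by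
  have hpt : ∀ β, A ∩ (principalAt β).Z ∈ (principalAt β).F ↔ β ∈ A := fun β => by
    simp [principalAt, inter_eq_right]
  simp only [fil, principals, forall_mem_image, mem_ofPred_eq, hpt]
  exact and_congr_right fun _ => exists_congr fun ε => and_congr_right fun _ =>
    ⟨fun h β hβ => h hβ.1 (not_lt.mp hβ.2), fun h β hβ hεβ => h ⟨hβ, not_lt.mpr hεβ⟩⟩

lemma fil_principals_subset {C D : Set Ordinal.{0}} {ε : Ordinal.{0}} (hε : ε < lam.ord)
    (hDC : D \ Iio ε ⊆ C) : fil lam (principals C) ⊆ fil lam (principals D) := by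
  intro A hA'
  rw [mem_fil_principals] at hA' ⊢
  obtain ⟨hA, ε', hε', hCA⟩ := hA'
  refine ⟨hA, max ε ε', max_lt hε hε', ?_⟩
  rintro β ⟨hβD, hβ⟩
  rw [mem_Iio, not_lt, max_le_iff] at hβ
  exact hCA ⟨hDC ⟨hβD, not_lt.mpr hβ.1⟩, not_lt.mpr hβ.2⟩

lemma principals_mem_Qzero (hunc : ℵ₀ < lam) {C : Set Ordinal.{0}} (hC : C ⊆ Iio lam.ord)
    (hcard : #C = Cardinal.lift.{1} lam) : principals C ∈ Qzero lam (principals (Iio lam.ord)) := by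
  refine ⟨⟨image_mono hC, (Cardinal.mk_image_eq principalAt_injective).trans hcard,
    fun ξ => ?_⟩, ?_, ?_⟩
  · have hfib : {t | t ∈ principals C ∧ t.a = ξ} ⊆ {principalAt ξ} := by
      rintro _ ⟨⟨β, -, rfl⟩, rfl⟩
      rfl
    exact (Cardinal.mk_le_mk_of_subset hfib).trans_lt (by simpa using one_lt_aleph0.trans hunc)
  · rintro _ ⟨β, -, rfl⟩ _ ⟨γ, -, rfl⟩ (h : β = γ)
    rw [h]
  · rintro _ ⟨β, -, rfl⟩ _ ⟨γ, -, rfl⟩ (h : β < γ)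
    exact singleton_subset_iff.mpr h

lemma IsCompleteUltraOn.filH_principals {U : Set (Set Ordinal.{0})}
    (hU : IsCompleteUltraOn lam U) : filH lam (principals '' U) = U := by
  ext A
  simp only [filH, exists_mem_image, mem_fil_principals]
  constructor
  · rintro ⟨C, hC, hA, ε, hε, hCA⟩
    exact hU.isFilterOn.mono (hU.diff_Iio_mem hC hε) hCA hA
  · intro hA
    obtain ⟨ξ, hξ⟩ := hU.isFilterOn.nonempty hA
    exact ⟨A, hA, hU.isFilterOn.subset hA, 0, zero_le.trans_lt (hU.isFilterOn.subset hA hξ),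
      sdiff_subset⟩

/-- The diagonal intersection of an enumeration of `𝒞` is almost contained in each member. -/
lemma IsNormalUltraOn.exists_almost_subset {W 𝒞 : Set (Set Ordinal.{0})}
    (hW : IsNormalUltraOn lam W) (hunc : ℵ₀ < lam) (h𝒞W : 𝒞 ⊆ W)
    (h𝒞 : #𝒞 ≤ Cardinal.lift.{1} lam) :
    ∃ D ∈ W, ∀ C ∈ 𝒞, ∃ ε < lam.ord, D \ Iio ε ⊆ C := by
  obtain ⟨ι⟩ : Nonempty (𝒞 ↪ Iio lam.ord) := by
    rw [← Cardinal.le_def]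
    simpa using h𝒞
  have hι : Function.Injective fun c : 𝒞 => (ι c : Ordinal.{0}) :=
    Subtype.val_injective.comp ι.injective
  obtain ⟨e, he_apply, he_else⟩ : ∃ e : Ordinal.{0} → Set Ordinal.{0},
      (∀ c : 𝒞, e (ι c) = c) ∧ ∀ α, (¬∃ c : 𝒞, (ι c : Ordinal.{0}) = α) → e α = Iio lam.ord :=
    ⟨_, hι.extend_apply _ _, fun α h => Function.extend_apply' _ _ _ h⟩
  have he : ∀ α, e α ∈ W := fun α => by
    by_cases h : ∃ c : 𝒞, (ι c : Ordinal.{0}) = α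
    · obtain ⟨c, rfl⟩ := h
      exact he_apply c ▸ h𝒞W c.2
    · exact he_else α h ▸ hW.isFilterOn.self_mem
  refine ⟨_, hW.diag_mem he, fun C hC => ?_⟩
  obtain ⟨α, hα, hαC⟩ : ∃ α < lam.ord, e α = C := ⟨ι ⟨C, hC⟩, (ι ⟨C, hC⟩).2, he_apply ⟨C, hC⟩⟩
  refine ⟨Order.succ α, (Cardinal.isSuccLimit_ord hunc.le).succ_lt hα, ?_⟩
  rintro β ⟨⟨-, hβ⟩, hαβ⟩
  exact hαC ▸ hβ α (Order.succ_le_iff.mp (not_lt.mp hαβ))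

lemma IsNormalUltraOn.exists_upper_bound {W : Set (Set Ordinal.{0})}
    (hW : IsNormalUltraOn lam W) (hunc : ℵ₀ < lam) :
    ∀ H₀ ⊆ principals '' W, #H₀ ≤ Cardinal.lift.{1} lam →
      ∃ q ∈ principals '' W, ∀ r ∈ H₀, fil lam r ⊆ fil lam q := by
  intro H₀ hH₀ hcard
  have hinj : Function.Injective principals := image_injective.mpr principalAt_injective
  obtain ⟨D, hD, hDC⟩ := hW.exists_almost_subset hunc (𝒞 := W ∩ principals ⁻¹' H₀)
    inter_subset_left ((Cardinal.mk_le_mk_of_subset inter_subset_right).trans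
      ((Cardinal.mk_preimage_of_injective _ _ hinj).trans hcard))
  refine ⟨principals D, mem_image_of_mem _ hD, fun r hr => ?_⟩
  obtain ⟨C, hC, rfl⟩ := hH₀ hr
  obtain ⟨ε, hε, hsub⟩ := hDC C ⟨hC, hr⟩
  exact fil_principals_subset hε hsub

end Principals

theorem stmt6_general (lam : Cardinal.{0}) (hunc : ℵ₀ < lam)
    (hmeas : ∃ U : Set (Set Ordinal.{0}), IsUltraOn U (Set.Iio lam.ord) ∧
      (∀ x : Ordinal.{0}, ({x} : Set Ordinal.{0}) ∉ U) ∧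
      ∀ S : Set (Set Ordinal.{0}), S ⊆ U → #S < Cardinal.lift.{1} lam →
        (Set.Iio lam.ord ∩ ⋂₀ S) ∈ U) :
    ∃ F : Set LocalFilter, IsLFS lam F ∧
      ∃ H ⊆ Qzero lam F,
        (∀ H₀ ⊆ H, #H₀ ≤ Cardinal.lift.{1} lam →
          ∃ q ∈ H, ∀ r ∈ H₀, fil lam r ⊆ fil lam q) ∧
        IsUltraOn (filH lam H) (Set.Iio lam.ord) ∧
        (∀ C, IsClub lam C → C ∈ filH lam H) ∧
        ¬ WeaklyReasonable lam (filH lam H) := by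
  obtain ⟨U, hUltra, hsingleton, hcomplete⟩ := hmeas
  obtain ⟨W, hW⟩ := (IsCompleteUltraOn.mk hUltra hsingleton hcomplete).exists_isNormalUltraOn hunc
  have hclub : ∀ C, IsClub lam C → C ∈ W := fun C hC => hW.club_mem hunc hC
  refine ⟨principals (Iio lam.ord), isLFS_principals hunc, principals '' W, ?_,
    hW.exists_upper_bound hunc, ?_⟩
  · rintro _ ⟨C, hC, rfl⟩
    exact principals_mem_Qzero hunc (hW.isFilterOn.subset hC) (hW.mk_eq hC)
  · rw [hW.filH_principals]
    exact ⟨hW.isUltraOn, hclub, not_weaklyReasonable_of_club_mem hunc hW.isFilterOn hclub⟩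

/-- If `lam` is measurable, then there are a system of local filters and a
`(<lam⁺)`-directed `H ⊆ Q⁰` generating an ultrafilter containing all clubs. -/
theorem stmt6 (lam : Cardinal.{0}) (hreg : lam.IsRegular) (hunc : ℵ₀ < lam)
    (hmeas : ∃ U : Set (Set Ordinal.{0}), IsUltraOn U (Set.Iio lam.ord) ∧
      (∀ x : Ordinal.{0}, ({x} : Set Ordinal.{0}) ∉ U) ∧
      ∀ S : Set (Set Ordinal.{0}), S ⊆ U → #S < Cardinal.lift.{1} lam →
        (Set.Iio lam.ord ∩ ⋂₀ S) ∈ U) :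
    ∃ F : Set LocalFilter, IsLFS lam F ∧
      ∃ H ⊆ Qzero lam F,
        (∀ H₀ ⊆ H, #H₀ ≤ Cardinal.lift.{1} lam →
          ∃ q ∈ H, ∀ r ∈ H₀, fil lam r ⊆ fil lam q) ∧
        IsUltraOn (filH lam H) (Set.Iio lam.ord) ∧
        (∀ C, IsClub lam C → C ∈ filH lam H) ∧
        ¬ WeaklyReasonable lam (filH lam H) :=
  stmt6_general lam hunc hmeas

end

end RS889
end
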